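/- arXiv:1605.07522 — 7 statements merged into one kernel-verified Lean document; each statement's English description precedes it below -/
import Mathlib

section
/- Suppose H satisfies ⟨H u, u⟩ ≥ μ·‖u‖² for all u ∈ E with μ > 0, and let x̃ be a minimizer of q over E with x̃ ≠ x⁰. Then ℓ(x⁰) ≥ ℓ(x̃) + ⟨H(x̃ − x⁰), x̃ − x⁰⟩, hence ℓ(x̃) < ℓ(x⁰); moreover q(x̃) − q(x⁰) ≤ (1/2)·(ℓ(x̃) − ℓ(x⁰)), and consequently q(x̃) − q(x⁰) < ζ·(ℓ(x̃) − ℓ(x⁰)) for every ζ ∈ (0, 1/2). -/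
open scoped RealInnerProductSpace

abbrev E (n : ℕ) := EuclideanSpace ℝ (Fin n)

/-- If `⟨Hu,u⟩ ≥ μ‖u‖²` with `μ > 0` and `x̃ ≠ x⁰` minimizes `q`, then
`ℓ(x⁰) ≥ ℓ(x̃) + ⟨H(x̃−x⁰), x̃−x⁰⟩`, hence `ℓ(x̃) < ℓ(x⁰)`; moreover
`q(x̃) − q(x⁰) ≤ (1/2)(ℓ(x̃) − ℓ(x⁰))`, and consequently
`q(x̃) − q(x⁰) < ζ(ℓ(x̃) − ℓ(x⁰))` for every `ζ ∈ (0, 1/2)`. -/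
theorem stmt2 {n : ℕ} (f g : E n → ℝ) (f' : E n → E n)
    (hfconv : ConvexOn ℝ Set.univ f) (hfC2 : ContDiff ℝ 2 f)
    (hgrad : ∀ x, HasGradientAt f (f' x) x)
    (hgconv : ConvexOn ℝ Set.univ g) (hgcont : Continuous g)
    (x₀ : E n) (H : E n →L[ℝ] E n)
    (hsa : ∀ u w, ⟪H u, w⟫ = ⟪u, H w⟫)
    (μ : ℝ) (hμ : 0 < μ) (hlb : ∀ u, μ * ‖u‖ ^ 2 ≤ ⟪H u, u⟫)
    (ℓ q : E n → ℝ)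
    (hℓ : ∀ y, ℓ y = f x₀ + ⟪f' x₀, y - x₀⟫ + g y)
    (hq : ∀ y, q y = ℓ y + (1/2) * ⟪H (y - x₀), y - x₀⟫)
    (xt : E n) (hxt : ∀ y, q xt ≤ q y) (hne : xt ≠ x₀) :
    ℓ x₀ ≥ ℓ xt + ⟪H (xt - x₀), xt - x₀⟫ ∧ ℓ xt < ℓ x₀ ∧
      q xt - q x₀ ≤ (1/2) * (ℓ xt - ℓ x₀) ∧
      ∀ ζ : ℝ, 0 < ζ → ζ < 1/2 → q xt - q x₀ < ζ * (ℓ xt - ℓ x₀) := by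

  set d := xt - x₀ with hd
  set c := (⟪H d, d⟫ : ℝ) with hcdef
  have hdne : d ≠ 0 := sub_ne_zero.mpr hne
  have hc : 0 < c := by
    have h1 := hlb d
    have h2 : 0 < ‖d‖ ^ 2 := pow_pos (norm_pos_iff.mpr hdne) 2
    nlinarith
  set A := (⟪f' x₀, xt - x₀⟫ : ℝ) with hA
  have hl0 : ℓ x₀ = f x₀ + g x₀ := by
    rw [hℓ]; simp [sub_self]
  have hlt : ℓ xt = f x₀ + A + g xt := by rw [hℓ]
  have key : ∀ t : ℝ, 0 < t → t < 1 → ℓ xt - ℓ x₀ ≤ -((1+t)/2) * c := by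
    intro t ht0 ht1
    set y := x₀ + t • (xt - x₀) with hy
    have hyd : y - x₀ = t • d := by rw [hy]; abel
    have hy2 : y = (1-t) • x₀ + t • xt := by rw [hy]; module
    have hg : g y ≤ (1-t) * g x₀ + t * g xt := by
      rw [hy2]
      have := hgconv.2 (Set.mem_univ x₀) (Set.mem_univ xt)
        (by linarith : (0:ℝ) ≤ 1 - t) ht0.le (by ring)
      simpa [smul_eq_mul] using this
    have hinner : (⟪f' x₀, y - x₀⟫ : ℝ) = t * A := by
      rw [hyd, real_inner_smul_right]
    have hHin : (⟪H (y - x₀), y - x₀⟫ : ℝ) = t^2 * c := by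
      rw [hyd, map_smul, real_inner_smul_right, real_inner_smul_left]; ring
    have hly : ℓ y = f x₀ + t * A + g y := by rw [hℓ, hinner]
    have hmin := hxt y
    rw [hq xt, hq y, hly, hlt, hHin] at hmin
    have hHt : (⟪H (xt - x₀), xt - x₀⟫ : ℝ) = c := rfl
    rw [hHt] at hmin
    have h2 : (1 - t) * (ℓ xt - ℓ x₀ + (1+t)/2 * c) ≤ (1 - t) * 0 := by
      rw [hl0, hlt]; nlinarith
    have h3 := le_of_mul_le_mul_left h2 (by linarith : (0:ℝ) < 1 - t)
    linarith
  have main : ℓ x₀ ≥ ℓ xt + c := by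
    by_contra hcon
    push_neg at hcon
    set ε := ℓ xt + c - ℓ x₀ with hε
    have hε0 : 0 < ε := by simp [hε]; linarith
    set t := max (1/2 : ℝ) (1 - ε / c) with ht
    have ht0 : 0 < t := lt_of_lt_of_le (by norm_num) (le_max_left _ _)
    have ht1 : t < 1 := by
      rcases le_total (1 - ε / c) (1/2 : ℝ) with h | h
      · rw [ht, max_eq_left h]; norm_num
      · rw [ht, max_eq_right h]
        have : 0 < ε / c := div_pos hε0 hc
        linarith
    have htge : 1 - ε / c ≤ t := le_max_right _ _
    have hkey := key t ht0 ht1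
    have hmc : (1 - ε / c) * c = c - ε := by field_simp
    have htc : c - ε ≤ t * c := by
      rw [← hmc]; exact mul_le_mul_of_nonneg_right htge hc.le
    nlinarith
  have hlt2 : ℓ xt < ℓ x₀ := by linarith
  have hqdiff : q xt - q x₀ ≤ (1/2) * (ℓ xt - ℓ x₀) := by
    have hq0 : q x₀ = ℓ x₀ := by
      rw [hq]; simp [sub_self]
    have hqt : q xt = ℓ xt + (1/2) * c := by rw [hq]
    rw [hq0, hqt]; linarith
  refine ⟨main, hlt2, hqdiff, fun ζ hζ0 hζ1 => ?_⟩
  have : ζ * (ℓ xt - ℓ x₀) > (1/2) * (ℓ xt - ℓ x₀) := by nlinarith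
  linarith
end

section
/- Suppose H satisfies ⟨H u, u⟩ ≥ μ·‖u‖² for all u ∈ E with μ > 0, let ζ ∈ (0,1), and let x̂ ∈ E satisfy q(x̂) − q(x⁰) ≤ ζ·(ℓ(x̂) − ℓ(x⁰)). Then ℓ(x⁰) − ℓ(x̂) ≥ (μ/(2(1−ζ)))·‖x̂ − x⁰‖², and for every α ∈ [0,1], ℓ(x⁰) − ℓ(x⁰ + α·(x̂ − x⁰)) ≥ (α·μ/(2(1−ζ)))·‖x̂ − x⁰‖². -/
open scoped RealInnerProductSpace

/-- If `⟨Hu,u⟩ ≥ μ‖u‖²` with `μ > 0`, `ζ ∈ (0,1)`, and `x̂` satisfies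
`q(x̂) − q(x⁰) ≤ ζ(ℓ(x̂) − ℓ(x⁰))`, then `ℓ(x⁰) − ℓ(x̂) ≥ (μ/(2(1−ζ)))‖x̂ − x⁰‖²` and,
for every `α ∈ [0,1]`, `ℓ(x⁰) − ℓ(x⁰ + α(x̂ − x⁰)) ≥ (αμ/(2(1−ζ)))‖x̂ − x⁰‖²`. -/
theorem stmt3 {n : ℕ} (f g : E n → ℝ) (f' : E n → E n)
    (hfconv : ConvexOn ℝ Set.univ f) (hfC2 : ContDiff ℝ 2 f)
    (hgrad : ∀ x, HasGradientAt f (f' x) x)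
    (hgconv : ConvexOn ℝ Set.univ g) (hgcont : Continuous g)
    (x₀ : E n) (H : E n →L[ℝ] E n)
    (hsa : ∀ u w, ⟪H u, w⟫ = ⟪u, H w⟫)
    (μ : ℝ) (hμ : 0 < μ) (hlb : ∀ u, μ * ‖u‖ ^ 2 ≤ ⟪H u, u⟫)
    (ζ : ℝ) (hζ : ζ ∈ Set.Ioo (0:ℝ) 1)
    (ℓ q : E n → ℝ)
    (hℓ : ∀ y, ℓ y = f x₀ + ⟪f' x₀, y - x₀⟫ + g y)
    (hq : ∀ y, q y = ℓ y + (1/2) * ⟪H (y - x₀), y - x₀⟫)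
    (xh : E n) (hxh : q xh - q x₀ ≤ ζ * (ℓ xh - ℓ x₀)) :
    ℓ x₀ - ℓ xh ≥ (μ / (2 * (1 - ζ))) * ‖xh - x₀‖ ^ 2 ∧
      ∀ α ∈ Set.Icc (0:ℝ) 1,
        ℓ x₀ - ℓ (x₀ + α • (xh - x₀)) ≥ (α * μ / (2 * (1 - ζ))) * ‖xh - x₀‖ ^ 2 := by
  obtain ⟨hζ0, hζ1⟩ := hζ
  have h1ζ : 0 < 1 - ζ := by linarith
  set d := xh - x₀ with hd
  -- key inequality
  have hq0 : q x₀ = ℓ x₀ := by simp [hq]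
  have hqh : q xh = ℓ xh + (1/2) * ⟪H d, d⟫ := hq xh
  have hHd : μ * ‖d‖ ^ 2 ≤ ⟪H d, d⟫ := hlb d
  have key : (1 - ζ) * (ℓ xh - ℓ x₀) ≤ -(1/2) * (μ * ‖d‖ ^ 2) := by
    nlinarith [hxh, hq0, hqh, hHd]
  have first : ℓ x₀ - ℓ xh ≥ (μ / (2 * (1 - ζ))) * ‖d‖ ^ 2 := by
    rw [ge_iff_le, div_mul_eq_mul_div, div_le_iff₀ (by positivity)]
    nlinarith [key]
  refine ⟨first, fun α hα => ?_⟩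
  obtain ⟨hα0, hα1⟩ := hα
  -- convexity of ℓ
  have hconv : ℓ (x₀ + α • d) ≤ (1 - α) * ℓ x₀ + α * ℓ xh := by
    have hx : x₀ + α • d = (1 - α) • x₀ + α • xh := by
      rw [hd]; module
    have hg := hgconv.2 (Set.mem_univ x₀) (Set.mem_univ xh)
      (by linarith : (0:ℝ) ≤ 1 - α) hα0 (by ring)
    simp only [smul_eq_mul] at hg
    rw [hx, hℓ, hℓ, hℓ]
    have hi : ⟪f' x₀, ((1 - α) • x₀ + α • xh) - x₀⟫
        = (1 - α) * ⟪f' x₀, x₀ - x₀⟫ + α * ⟪f' x₀, xh - x₀⟫ := by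
      have : ((1 - α) • x₀ + α • xh) - x₀ = (1-α) • (x₀ - x₀) + α • (xh - x₀) := by
        module
      rw [this, inner_add_right, inner_smul_right, inner_smul_right]
    rw [hi]
    nlinarith [hg]
  have hαμ : α * (ℓ x₀ - ℓ xh) ≥ α * ((μ / (2 * (1 - ζ))) * ‖d‖ ^ 2) :=
    mul_le_mul_of_nonneg_left first hα0
  calc (α * μ / (2 * (1 - ζ))) * ‖d‖ ^ 2
      = α * ((μ / (2 * (1 - ζ))) * ‖d‖ ^ 2) := by ring
    _ ≤ α * (ℓ x₀ - ℓ xh) := hαμ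
    _ ≤ ℓ x₀ - ℓ (x₀ + α • d) := by linarith [hconv]
end

section
/- Suppose ∇f is L₁-Lipschitz on E with L₁ > 0, let θ ∈ (0,1/2) and ζ ∈ (θ,1/2), suppose H satisfies ⟨H u, u⟩ ≥ μ·‖u‖² for all u ∈ E with μ > 0, and let x̂ ∈ E satisfy q(x̂) − q(x⁰) ≤ ζ·(ℓ(x̂) − ℓ(x⁰)); set d = x̂ − x⁰. Then for every α ∈ (0,1] with α < (1−θ)·μ/((1−ζ)·L₁), the descent condition F(x⁰) − F(x⁰ + α·d) ≥ θ·(ℓ(x⁰) − ℓ(x⁰ + α·d)) holds. Consequently, for any β ∈ (0,1) there exists a smallest nonnegative integer i such that α = β^i satisfies the descent condition, and this step size satisfies β^i ≥ min{1, β·(1−θ)·μ/((1−ζ)·L₁)}. -/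
/-!
At `x₀ + α d` the gap `F - ℓ` is the linearisation error of `f`, at most `L₁ α² ‖d‖² / 2` by the
descent lemma. Convexity of `g` gives `ℓ x₀ - ℓ (x₀ + α d) ≥ α (ℓ x₀ - ℓ x̂)`, and the inexactness
condition with `⟨H d, d⟩ ≥ μ ‖d‖²` gives `μ ‖d‖² / 2 ≤ (1 - ζ) (ℓ x₀ - ℓ x̂)`. Hence the gap is at
most a `(1 - θ)`-share of the model decrease as soon as `α (1 - ζ) L₁ ≤ (1 - θ) μ`. Backtracking
from `α = 1` therefore stops, and the power of `β` just before the accepted one was rejected, so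
it is at least the threshold.
-/

open scoped RealInnerProductSpace

section LineSearch

variable {V : Type*} [NormedAddCommGroup V] [InnerProductSpace ℝ V]

theorem image_add_le_of_lipschitz_gradient [CompleteSpace V] {f : V → ℝ} {f' : V → V}
    (hgrad : ∀ x, HasGradientAt f (f' x) x) {L : ℝ}
    (hlip : ∀ y z, ‖f' y - f' z‖ ≤ L * ‖y - z‖) (x p : V) :
    f (x + p) ≤ f x + ⟪f' x, p⟫ + L / 2 * ‖p‖ ^ 2 := by
  set φ : ℝ → ℝ := fun t => f (x + t • p) - t * ⟪f' x, p⟫ - L / 2 * t ^ 2 * ‖p‖ ^ 2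
  have hφ : ∀ t, HasDerivAt φ (⟪f' (x + t • p), p⟫ - ⟪f' x, p⟫ - L * t * ‖p‖ ^ 2) t := by
    intro t
    have hline : HasDerivAt (fun t : ℝ => x + t • p) p t := by
      simpa using ((hasDerivAt_id t).smul_const p).const_add x
    have := (((hgrad _).hasFDerivAt.comp_hasDerivAt t hline).sub
      ((hasDerivAt_id t).mul_const ⟪f' x, p⟫)).sub
      (((hasDerivAt_pow 2 t).const_mul (L / 2)).mul_const (‖p‖ ^ 2))
    refine this.congr_deriv ?_
    simp only [InnerProductSpace.toDual_apply_apply]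
    ring
  have hnonpos : ∀ t ∈ interior (Set.Ici (0 : ℝ)),
      ⟪f' (x + t • p), p⟫ - ⟪f' x, p⟫ - L * t * ‖p‖ ^ 2 ≤ 0 := by
    intro t ht
    rw [interior_Ici] at ht
    have h := hlip (x + t • p) x
    rw [add_sub_cancel_left, norm_smul, Real.norm_of_nonneg ht.le] at h
    refine sub_nonpos.mpr ?_
    calc ⟪f' (x + t • p), p⟫ - ⟪f' x, p⟫ = ⟪f' (x + t • p) - f' x, p⟫ := (inner_sub_left ..).symm
      _ ≤ ‖f' (x + t • p) - f' x‖ * ‖p‖ := real_inner_le_norm _ _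
      _ ≤ L * (t * ‖p‖) * ‖p‖ := by gcongr
      _ = L * t * ‖p‖ ^ 2 := by ring
  have hanti := antitoneOn_of_hasDerivWithinAt_nonpos (convex_Ici 0)
    (fun t _ => (hφ t).continuousAt.continuousWithinAt) (fun t _ => (hφ t).hasDerivWithinAt)
    hnonpos
  have := hanti (Set.mem_Ici.mpr le_rfl) (Set.mem_Ici.mpr zero_le_one) zero_le_one
  simp only [φ, zero_smul, add_zero, one_smul, zero_mul, one_mul, sub_zero] at this
  linarith

theorem mul_norm_sq_le_model_decrease {ℓ q : V → ℝ} {H : V →L[ℝ] V} {x₀ xh : V} {μ ζ : ℝ}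
    (hlb : ∀ u, μ * ‖u‖ ^ 2 ≤ ⟪H u, u⟫)
    (hq : ∀ y, q y = ℓ y + (1/2) * ⟪H (y - x₀), y - x₀⟫)
    (hxh : q xh - q x₀ ≤ ζ * (ℓ xh - ℓ x₀)) :
    μ * ‖xh - x₀‖ ^ 2 / 2 ≤ (1 - ζ) * (ℓ x₀ - ℓ xh) := by
  have h := hlb (xh - x₀)
  rw [hq, hq, sub_self, map_zero, inner_zero_left] at hxh
  linarith

theorem mul_model_decrease_le {f g ℓ : V → ℝ} {f' : V → V} {x₀ xh : V}
    (hgconv : ConvexOn ℝ Set.univ g) (hℓ : ∀ y, ℓ y = f x₀ + ⟪f' x₀, y - x₀⟫ + g y)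
    {α : ℝ} (hα0 : 0 ≤ α) (hα1 : α ≤ 1) :
    α * (ℓ x₀ - ℓ xh) ≤ ℓ x₀ - ℓ (x₀ + α • (xh - x₀)) := by
  have hg : g (x₀ + α • (xh - x₀)) ≤ (1 - α) * g x₀ + α * g xh := by
    have hy : x₀ + α • (xh - x₀) = (1 - α) • x₀ + α • xh := by module
    rw [hy]
    exact hgconv.2 (Set.mem_univ _) (Set.mem_univ _) (by linarith) hα0 (by ring)
  simp only [hℓ, add_sub_cancel_left, sub_self, inner_zero_right, inner_smul_right] at hg ⊢
  nlinarith

theorem descent_condition_of_lt_step_bound [CompleteSpace V] {f g F ℓ q : V → ℝ} {f' : V → V}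
    {H : V →L[ℝ] V} {x₀ xh : V} {L₁ θ ζ μ : ℝ}
    (hgrad : ∀ x, HasGradientAt f (f' x) x) (hgconv : ConvexOn ℝ Set.univ g)
    (hF : ∀ y, F y = f y + g y) (hL₁ : 0 < L₁) (hlip : ∀ y z, ‖f' y - f' z‖ ≤ L₁ * ‖y - z‖)
    (hθ : θ < 1) (hζ : ζ < 1) (hlb : ∀ u, μ * ‖u‖ ^ 2 ≤ ⟪H u, u⟫)
    (hℓ : ∀ y, ℓ y = f x₀ + ⟪f' x₀, y - x₀⟫ + g y)
    (hq : ∀ y, q y = ℓ y + (1/2) * ⟪H (y - x₀), y - x₀⟫)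
    (hxh : q xh - q x₀ ≤ ζ * (ℓ xh - ℓ x₀))
    {α : ℝ} (hα0 : 0 < α) (hα1 : α ≤ 1) (hα : α < (1 - θ) * μ / ((1 - ζ) * L₁)) :
    F x₀ - F (x₀ + α • (xh - x₀)) ≥ θ * (ℓ x₀ - ℓ (x₀ + α • (xh - x₀))) := by
  set d := xh - x₀
  have hζ1 : 0 < 1 - ζ := by linarith
  have hF₀ : F x₀ = ℓ x₀ := by simp [hF, hℓ]
  have hgap : F (x₀ + α • d) - ℓ (x₀ + α • d) ≤ L₁ / 2 * α ^ 2 * ‖d‖ ^ 2 := by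
    have h := image_add_le_of_lipschitz_gradient hgrad hlip x₀ (α • d)
    rw [norm_smul, Real.norm_of_nonneg hα0.le] at h
    rw [hF, hℓ, add_sub_cancel_left]
    linarith
  have hdec := mul_model_decrease_le (xh := xh) hgconv hℓ hα0.le hα1
  have hquad := mul_norm_sq_le_model_decrease hlb hq hxh
  have hstep : α * ((1 - ζ) * L₁) ≤ (1 - θ) * μ :=
    ((lt_div_iff₀ (mul_pos hζ1 hL₁)).mp hα).le
  have hpay : L₁ / 2 * α ^ 2 * ‖d‖ ^ 2 ≤ (1 - θ) * (ℓ x₀ - ℓ (x₀ + α • d)) := by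
    refine le_of_mul_le_mul_left ?_ hζ1
    calc (1 - ζ) * (L₁ / 2 * α ^ 2 * ‖d‖ ^ 2)
        = α * ((1 - ζ) * L₁) * (α * ‖d‖ ^ 2 / 2) := by ring
      _ ≤ (1 - θ) * μ * (α * ‖d‖ ^ 2 / 2) := by gcongr
      _ = (1 - θ) * α * (μ * ‖d‖ ^ 2 / 2) := by ring
      _ ≤ (1 - θ) * α * ((1 - ζ) * (ℓ x₀ - ℓ xh)) := by gcongr
      _ = (1 - ζ) * ((1 - θ) * (α * (ℓ x₀ - ℓ xh))) := by ring
      _ ≤ (1 - ζ) * ((1 - θ) * (ℓ x₀ - ℓ (x₀ + α • d))) := by gcongr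
  linarith

end LineSearch

theorem exists_least_pow_ge_min {P : ℝ → Prop} {c β : ℝ} (hc : 0 < c) (hβ0 : 0 < β)
    (hβ1 : β < 1) (hP : ∀ α, 0 < α → α ≤ 1 → α < c → P α) :
    ∃ i : ℕ, P (β ^ i) ∧ (∀ j < i, ¬ P (β ^ j)) ∧ β ^ i ≥ min 1 (β * c) := by
  classical
  have hex : ∃ i : ℕ, P (β ^ i) := by
    obtain ⟨i, hi⟩ := exists_pow_lt_of_lt_one hc hβ1
    exact ⟨i, hP _ (pow_pos hβ0 i) (pow_le_one₀ hβ0.le hβ1.le) hi⟩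
  refine ⟨Nat.find hex, Nat.find_spec hex, fun j hj => Nat.find_min hex hj, ?_⟩
  cases hi : Nat.find hex with
  | zero => simp
  | succ m =>
    have hcm : c ≤ β ^ m := by
      by_contra! hlt
      exact Nat.find_min hex (by omega) (hP _ (pow_pos hβ0 m) (pow_le_one₀ hβ0.le hβ1.le) hlt)
    rw [pow_succ', ge_iff_le]
    exact (min_le_right _ _).trans (mul_le_mul_of_nonneg_left hcm hβ0.le)

theorem stmt4_general {n : ℕ} (f g : E n → ℝ) (f' : E n → E n)
    (hgrad : ∀ x, HasGradientAt f (f' x) x)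
    (hgconv : ConvexOn ℝ Set.univ g)
    (F : E n → ℝ) (hF : ∀ y, F y = f y + g y)
    (L₁ : ℝ) (hL₁ : 0 < L₁) (hlip : ∀ y z, ‖f' y - f' z‖ ≤ L₁ * ‖y - z‖)
    (θ ζ : ℝ) (hθ : θ ∈ Set.Ioo (0:ℝ) (1/2)) (hζ : ζ ∈ Set.Ioo θ (1/2))
    (x₀ : E n) (H : E n →L[ℝ] E n)
    (μ : ℝ) (hμ : 0 < μ) (hlb : ∀ u, μ * ‖u‖ ^ 2 ≤ ⟪H u, u⟫)
    (ℓ q : E n → ℝ)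
    (hℓ : ∀ y, ℓ y = f x₀ + ⟪f' x₀, y - x₀⟫ + g y)
    (hq : ∀ y, q y = ℓ y + (1/2) * ⟪H (y - x₀), y - x₀⟫)
    (xh : E n) (hxh : q xh - q x₀ ≤ ζ * (ℓ xh - ℓ x₀))
    (d : E n) (hd : d = xh - x₀) :
    (∀ α : ℝ, 0 < α → α ≤ 1 → α < (1 - θ) * μ / ((1 - ζ) * L₁) →
        F x₀ - F (x₀ + α • d) ≥ θ * (ℓ x₀ - ℓ (x₀ + α • d))) ∧
      ∀ β : ℝ, 0 < β → β < 1 →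
        ∃ i : ℕ,
          (F x₀ - F (x₀ + β ^ i • d) ≥ θ * (ℓ x₀ - ℓ (x₀ + β ^ i • d))) ∧
          (∀ j : ℕ, j < i →
            ¬ (F x₀ - F (x₀ + β ^ j • d) ≥ θ * (ℓ x₀ - ℓ (x₀ + β ^ j • d)))) ∧
          β ^ i ≥ min 1 (β * (1 - θ) * μ / ((1 - ζ) * L₁)) := by
  subst hd
  obtain ⟨-, hθ2⟩ := hθ
  obtain ⟨-, hζ2⟩ := hζ
  have hdescent : ∀ α : ℝ, 0 < α → α ≤ 1 → α < (1 - θ) * μ / ((1 - ζ) * L₁) →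
      F x₀ - F (x₀ + α • (xh - x₀)) ≥ θ * (ℓ x₀ - ℓ (x₀ + α • (xh - x₀))) :=
    fun α hα0 hα1 hα => descent_condition_of_lt_step_bound hgrad hgconv hF hL₁ hlip (by linarith)
      (by linarith) hlb hℓ hq hxh hα0 hα1 hα
  refine ⟨hdescent, fun β hβ0 hβ1 => ?_⟩
  have hc : 0 < (1 - θ) * μ / ((1 - ζ) * L₁) := by
    have : 0 < 1 - θ := by linarith
    have : 0 < 1 - ζ := by linarith
    positivity
  obtain ⟨i, hi, hmin, hge⟩ := exists_least_pow_ge_min hc hβ0 hβ1 hdescent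
  refine ⟨i, hi, hmin, ?_⟩
  convert hge using 3
  ring

/-- Under the L₁-Lipschitz gradient assumption, with `θ ∈ (0,1/2)`,
`ζ ∈ (θ,1/2)`, `⟨Hu,u⟩ ≥ μ‖u‖²` (`μ > 0`), and `x̂` satisfying the inexactness
condition `q(x̂) − q(x⁰) ≤ ζ(ℓ(x̂) − ℓ(x⁰))`, the descent condition
`F(x⁰) − F(x⁰ + αd) ≥ θ(ℓ(x⁰) − ℓ(x⁰ + αd))` holds for all `α ∈ (0,1]` with
`α < (1−θ)μ/((1−ζ)L₁)`; consequently, for any `β ∈ (0,1)` there is a smallest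
`i ∈ ℕ` such that `α = βⁱ` satisfies the descent condition, and
`βⁱ ≥ min{1, β(1−θ)μ/((1−ζ)L₁)}`. -/
theorem stmt4 {n : ℕ} (f g : E n → ℝ) (f' : E n → E n)
    (hfconv : ConvexOn ℝ Set.univ f) (hfC2 : ContDiff ℝ 2 f)
    (hgrad : ∀ x, HasGradientAt f (f' x) x)
    (hgconv : ConvexOn ℝ Set.univ g) (hgcont : Continuous g)
    (F : E n → ℝ) (hF : ∀ y, F y = f y + g y)
    (L₁ : ℝ) (hL₁ : 0 < L₁) (hlip : ∀ y z, ‖f' y - f' z‖ ≤ L₁ * ‖y - z‖)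
    (θ ζ : ℝ) (hθ : θ ∈ Set.Ioo (0:ℝ) (1/2)) (hζ : ζ ∈ Set.Ioo θ (1/2))
    (x₀ : E n) (H : E n →L[ℝ] E n)
    (hsa : ∀ u w, ⟪H u, w⟫ = ⟪u, H w⟫)
    (μ : ℝ) (hμ : 0 < μ) (hlb : ∀ u, μ * ‖u‖ ^ 2 ≤ ⟪H u, u⟫)
    (ℓ q : E n → ℝ)
    (hℓ : ∀ y, ℓ y = f x₀ + ⟪f' x₀, y - x₀⟫ + g y)
    (hq : ∀ y, q y = ℓ y + (1/2) * ⟪H (y - x₀), y - x₀⟫)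
    (xh : E n) (hxh : q xh - q x₀ ≤ ζ * (ℓ xh - ℓ x₀))
    (d : E n) (hd : d = xh - x₀) :
    (∀ α : ℝ, 0 < α → α ≤ 1 → α < (1 - θ) * μ / ((1 - ζ) * L₁) →
        F x₀ - F (x₀ + α • d) ≥ θ * (ℓ x₀ - ℓ (x₀ + α • d))) ∧
      ∀ β : ℝ, 0 < β → β < 1 →
        ∃ i : ℕ,
          (F x₀ - F (x₀ + β ^ i • d) ≥ θ * (ℓ x₀ - ℓ (x₀ + β ^ i • d))) ∧
          (∀ j : ℕ, j < i →
            ¬ (F x₀ - F (x₀ + β ^ j • d) ≥ θ * (ℓ x₀ - ℓ (x₀ + β ^ j • d)))) ∧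
          β ^ i ≥ min 1 (β * (1 - θ) * μ / ((1 - ζ) * L₁)) :=
  stmt4_general f g f' hgrad hgconv F hF L₁ hL₁ hlip θ ζ hθ hζ x₀ H μ hμ hlb ℓ q hℓ hq xh hxh d hd
end

section
/- Let x⁰ ∈ E, μ > 0, η ∈ (0,1), and let A be a self-adjoint positive semidefinite continuous linear operator on E with ⟨A u, u⟩ ≤ L₁·‖u‖² for all u ∈ E; set H = A + μ·Id and r_H(x) = ‖x − prox_g(x − ∇f(x⁰) − H(x − x⁰))‖. If x̂ ∈ E satisfies r_H(x̂) ≤ η·r(x⁰), then (1 − η)·r(x⁰) ≤ (L₁ + μ + 2)·‖x̂ − x⁰‖. -/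
open scoped RealInnerProductSpace

lemma prox_key {n : ℕ} (g : E n → ℝ) (prox : E n → E n)
    (hgconv : ConvexOn ℝ Set.univ g)
    (hprox : ∀ v u, (1/2) * ‖prox v - v‖ ^ 2 + g (prox v) ≤ (1/2) * ‖u - v‖ ^ 2 + g u)
    (v u : E n) : g (prox v) - g u ≤ ⟪prox v - v, u - prox v⟫ := by
  set p := prox v with hp
  have key : ∀ t : ℝ, 0 < t → t ≤ 1 →
      g p - g u ≤ ⟪p - v, u - p⟫ + (t/2) * ‖u - p‖^2 := by
    intro t ht ht1
    have hconv := hgconv.2 (Set.mem_univ p) (Set.mem_univ u)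
      (by linarith : (0:ℝ) ≤ 1 - t) ht.le (by ring)
    have hineq := hprox v ((1-t) • p + t • u)
    have hre : (1-t) • p + t • u - v = (p - v) + t • (u - p) := by
      module
    rw [hre] at hineq
    have hns : ‖(p - v) + t • (u - p)‖^2
        = ‖p - v‖^2 + 2 * (t * ⟪p - v, u - p⟫) + t^2 * ‖u - p‖^2 := by
      rw [norm_add_sq_real, real_inner_smul_right, norm_smul]
      simp [abs_of_pos ht]; ring
    rw [hns] at hineq
    simp only [smul_eq_mul] at hconv
    have hdiv : t * (g p - g u - ⟪p - v, u - p⟫ - (t/2) * ‖u - p‖^2) ≤ 0 := by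
      nlinarith [hineq, hconv]
    nlinarith [hdiv, ht]
  have h2 : g p - g u ≤ ⟪p - v, u - p⟫ := by
    apply le_of_forall_pos_le_add
    intro ε hε
    have hX : (0:ℝ) < ‖u - p‖^2 + 1 := by positivity
    set t : ℝ := min 1 (2 * ε / (‖u - p‖^2 + 1)) with htdef
    have ht0 : 0 < t := lt_min one_pos (by positivity)
    have ht1 : t ≤ 1 := min_le_left _ _
    have := key t ht0 ht1
    have htle : t ≤ 2 * ε / (‖u - p‖^2 + 1) := min_le_right _ _
    have : (t/2) * ‖u - p‖^2 ≤ ε := by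
      have h1 : t * (‖u - p‖^2 + 1) ≤ 2 * ε := by
        rw [le_div_iff₀ hX] at htle
        linarith
      nlinarith [sq_nonneg ‖u - p‖, ht0]
    linarith [key t ht0 ht1]
  exact h2

lemma prox_nonexp {n : ℕ} (g : E n → ℝ) (prox : E n → E n)
    (hgconv : ConvexOn ℝ Set.univ g)
    (hprox : ∀ v u, (1/2) * ‖prox v - v‖ ^ 2 + g (prox v) ≤ (1/2) * ‖u - v‖ ^ 2 + g u)
    (v w : E n) : ‖prox v - prox w‖ ≤ ‖v - w‖ := by
  have h1 := prox_key g prox hgconv hprox v (prox w)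
  have h2 := prox_key g prox hgconv hprox w (prox v)
  set p := prox v
  set q := prox w
  have e1 : ⟪p - v, q - p⟫ = -⟪p - v, p - q⟫ := by
    rw [← inner_neg_right]; congr 1; abel
  have e2 : ⟪q - w, p - q⟫ = ⟪q - w, p - q⟫ := rfl
  have e3 : ⟪v - w, p - q⟫ - ⟪p - q, p - q⟫ = ⟪q - w, p - q⟫ - ⟪p - v, p - q⟫ := by
    rw [← inner_sub_left, ← inner_sub_left]; congr 1; abel
  have hsq : ⟪p - q, p - q⟫ = ‖p - q‖^2 := real_inner_self_eq_norm_sq _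
  have hcs : ⟪v - w, p - q⟫ ≤ ‖v - w‖ * ‖p - q‖ := real_inner_le_norm _ _
  have hmain : ‖p - q‖^2 ≤ ‖v - w‖ * ‖p - q‖ := by
    rw [e1] at h1
    linarith [h1, h2, e3, hsq, hcs]
  rcases eq_or_lt_of_le (norm_nonneg (p - q)) with h | h
  · rw [← h]; exact norm_nonneg _
  · have : ‖p - q‖ * ‖p - q‖ ≤ ‖v - w‖ * ‖p - q‖ := by nlinarith
    exact le_of_mul_le_mul_right this h

lemma opbound {n : ℕ} (A : E n →L[ℝ] E n) (L₁ : ℝ)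
    (hsa : ∀ u w, ⟪A u, w⟫ = ⟪u, A w⟫)
    (hpsd : ∀ u, 0 ≤ ⟪A u, u⟫)
    (hub : ∀ u, ⟪A u, u⟫ ≤ L₁ * ‖u‖ ^ 2)
    (u : E n) : ‖A u‖ ≤ L₁ * ‖u‖ := by
  by_cases hAu : A u = 0
  · rw [hAu, norm_zero]
    by_cases hu : u = 0
    · simp [hu]
    · have hn0 : 0 < ‖u‖ := norm_pos_iff.mpr hu
      have hn : 0 < ‖u‖^2 := pow_pos hn0 2
      have hL : 0 ≤ L₁ := by nlinarith [hpsd u, hub u]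
      exact mul_nonneg hL (norm_nonneg u)
  · have hu : u ≠ 0 := by rintro rfl; simp at hAu
    have hn0 : 0 < ‖u‖ := norm_pos_iff.mpr hu
    have hn : 0 < ‖u‖^2 := pow_pos hn0 2
    have hL : 0 ≤ L₁ := by nlinarith [hpsd u, hub u]
    have hq : ∀ t : ℝ, 0 ≤ ⟪A (A u), A u⟫ * (t * t) + (2 * ⟪A u, A u⟫) * t + ⟪A u, u⟫ := by
      intro t
      have h0 := hpsd (u + t • (A u))
      have hmap : A (u + t • (A u)) = A u + t • A (A u) := by
        rw [map_add, map_smul]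
      rw [hmap, inner_add_left, inner_add_right, inner_add_right,
        real_inner_smul_left, real_inner_smul_right, real_inner_smul_right,
        real_inner_smul_left] at h0
      have hc : ⟪A (A u), u⟫ = ⟪A u, A u⟫ := by rw [hsa (A u) u, real_inner_comm]
      have he : ⟪A (A u), A u⟫ * (t * t) + (2 * ⟪A u, A u⟫) * t + ⟪A u, u⟫
          = ⟪A u, u⟫ + t * ⟪A u, A u⟫ + (t * ⟪A (A u), u⟫ + t * (t * ⟪A (A u), A u⟫)) := by
        rw [hc]; ring
      rw [he]; exact h0
    have hd := discrim_le_zero hq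
    rw [discrim] at hd
    have hww : ⟪A u, A u⟫ = ‖A u‖^2 := real_inner_self_eq_norm_sq _
    have hAn : 0 < ‖A u‖ := norm_pos_iff.mpr hAu
    have s2 : ⟪A (A u), A u⟫ * ⟪A u, u⟫ ≤ (L₁ * ‖A u‖^2) * (L₁ * ‖u‖^2) :=
      mul_le_mul (hub (A u)) (hub u) (hpsd u) (by positivity)
    have s1 : ‖A u‖^2 * ‖A u‖^2 ≤ (L₁ * ‖A u‖^2) * (L₁ * ‖u‖^2) := by
      nlinarith [hd, s2, hww]
    have s3 : ‖A u‖^2 ≤ (L₁ * ‖u‖)^2 := by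
      nlinarith [s1, pow_pos hAn 2]
    nlinarith [s3, hAn, mul_nonneg hL (norm_nonneg u)]

/-- With `H = A + μ·Id`, where `A` is self-adjoint PSD with
`⟨Au,u⟩ ≤ L₁‖u‖²`, and `r_H(x) = ‖x − prox_g(x − ∇f(x⁰) − H(x − x⁰))‖`, if
`r_H(x̂) ≤ η·r(x⁰)` then `(1 − η)·r(x⁰) ≤ (L₁ + μ + 2)·‖x̂ − x⁰‖`. -/
theorem stmt5 {n : ℕ} (f g : E n → ℝ) (f' : E n → E n) (prox : E n → E n)
    (hfconv : ConvexOn ℝ Set.univ f) (hfC2 : ContDiff ℝ 2 f)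
    (hgrad : ∀ x, HasGradientAt f (f' x) x)
    (hgconv : ConvexOn ℝ Set.univ g) (hgcont : Continuous g)
    (hprox : ∀ v u, (1/2) * ‖prox v - v‖ ^ 2 + g (prox v) ≤ (1/2) * ‖u - v‖ ^ 2 + g u)
    (r : E n → ℝ) (hr : ∀ x, r x = ‖x - prox (x - f' x)‖)
    (x₀ : E n) (μ η L₁ : ℝ) (hμ : 0 < μ) (hη : η ∈ Set.Ioo (0:ℝ) 1)
    (A : E n →L[ℝ] E n)
    (hsa : ∀ u w, ⟪A u, w⟫ = ⟪u, A w⟫)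
    (hpsd : ∀ u, 0 ≤ ⟪A u, u⟫)
    (hub : ∀ u, ⟪A u, u⟫ ≤ L₁ * ‖u‖ ^ 2)
    (H : E n →L[ℝ] E n) (hH : H = A + μ • ContinuousLinearMap.id ℝ (E n))
    (rH : E n → ℝ) (hrH : ∀ x, rH x = ‖x - prox (x - f' x₀ - H (x - x₀))‖)
    (xh : E n) (hxh : rH xh ≤ η * r x₀) :
    (1 - η) * r x₀ ≤ (L₁ + μ + 2) * ‖xh - x₀‖ := by
  set v₀ := x₀ - f' x₀ with hv₀
  set vh := xh - f' x₀ - H (xh - x₀) with hvh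
  -- r x₀ = rH x₀ base point
  have hr0 : r x₀ = ‖x₀ - prox v₀‖ := hr x₀
  -- H bound
  have hHb : ∀ z : E n, ‖H z‖ ≤ (L₁ + μ) * ‖z‖ := by
    intro z
    rw [hH]
    simp only [ContinuousLinearMap.add_apply, ContinuousLinearMap.smul_apply,
      ContinuousLinearMap.id_apply]
    calc ‖A z + μ • z‖ ≤ ‖A z‖ + ‖μ • z‖ := norm_add_le _ _
      _ ≤ L₁ * ‖z‖ + μ * ‖z‖ := by
          gcongr
          · exact opbound A L₁ hsa hpsd hub z
          · rw [norm_smul, Real.norm_eq_abs, abs_of_pos hμ]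
      _ = (L₁ + μ) * ‖z‖ := by ring
  have hvdiff : ‖vh - v₀‖ ≤ (L₁ + μ + 1) * ‖xh - x₀‖ := by
    have : vh - v₀ = (xh - x₀) - H (xh - x₀) := by
      rw [hvh, hv₀]; abel
    rw [this]
    calc ‖(xh - x₀) - H (xh - x₀)‖ ≤ ‖xh - x₀‖ + ‖H (xh - x₀)‖ := norm_sub_le _ _
      _ ≤ ‖xh - x₀‖ + (L₁ + μ) * ‖xh - x₀‖ := by linarith [hHb (xh - x₀)]
      _ = (L₁ + μ + 1) * ‖xh - x₀‖ := by ring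
  have hne : ‖prox vh - prox v₀‖ ≤ ‖vh - v₀‖ :=
    prox_nonexp g prox hgconv hprox vh v₀
  have hrHxh : rH xh = ‖xh - prox vh‖ := hrH xh
  have tri : ‖x₀ - prox v₀‖ ≤ ‖x₀ - xh‖ + ‖xh - prox vh‖ + ‖prox vh - prox v₀‖ := by
    have : x₀ - prox v₀ = (x₀ - xh) + (xh - prox vh) + (prox vh - prox v₀) := by abel
    rw [this]
    exact norm_add₃_le
  have hxflip : ‖x₀ - xh‖ = ‖xh - x₀‖ := by rw [norm_sub_rev]
  have hmid : ‖xh - prox vh‖ ≤ η * r x₀ := by rw [← hrHxh]; exact hxh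
  have : r x₀ ≤ ‖xh - x₀‖ + η * r x₀ + (L₁ + μ + 1) * ‖xh - x₀‖ := by
    calc r x₀ = ‖x₀ - prox v₀‖ := hr0
      _ ≤ ‖x₀ - xh‖ + ‖xh - prox vh‖ + ‖prox vh - prox v₀‖ := tri
      _ ≤ ‖xh - x₀‖ + η * r x₀ + (L₁ + μ + 1) * ‖xh - x₀‖ := by
          rw [hxflip]
          linarith [hmid, le_trans hne hvdiff]
  linarith
end

section
/- Suppose ∇f is L₁-Lipschitz on E with L₁ > 0 and the IRPN iteration hypotheses hold. Then r(x^k) → 0 as k → ∞. Consequently, every cluster point x* of the sequence {x^k} satisfies r(x*) = 0 and x* ∈ X, i.e., x* minimizes F. -/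
/-!
Since `∇²f(xᵏ)` is positive semidefinite, the inexactness condition on `q_k` makes the direction
`dᵏ` decrease the linear model `ℓ_k` by at least `μ_k ‖dᵏ‖² / (2(1 - ζ))`, and the Armijo test turns
this into `F(xᵏ) - F(xᵏ⁺¹) ≥ θ α_k μ_k ‖dᵏ‖² / (2(1 - ζ))`. The descent lemma for the `L₁`-Lipschitz
gradient shows that the test can only fail at step sizes below `(1 - θ) μ_k / (2(1 - ζ) L₁)`, so
`α_k ≥ min 1 (β (1 - θ) μ_k / (2(1 - ζ) L₁))`, and nonexpansiveness of the proximal map gives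
`(1 - η) r(xᵏ) ≤ (2 + L₁ + μ_k) ‖dᵏ‖`. As `μ_k = c r(xᵏ)^ρ`, these bounds combine into an
increasing function of `r(xᵏ)` alone which is dominated by the decrease of `F`; since `F` is
bounded below the decrease tends to `0`, hence so does `r(xᵏ)`. The residual is continuous, so it
vanishes at every cluster point, and a zero of the residual is a fixed point of the proximal
gradient map, hence a minimizer of `F` by convexity.
-/

open Filter Topology Set
open scoped RealInnerProductSpace NNReal

section

variable {V : Type*} [NormedAddCommGroup V] [InnerProductSpace ℝ V]

lemma ConvexOn.add_inner_le_of_hasGradientAt [CompleteSpace V] {f : V → ℝ} {f'x x : V}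
    (hf : ConvexOn ℝ univ f) (hx : HasGradientAt f f'x x) (y : V) :
    f x + ⟪f'x, y - x⟫ ≤ f y := by
  have hderiv : HasDerivAt (f ∘ AffineMap.lineMap (k := ℝ) x y) ⟪f'x, y - x⟫ 0 := by
    have := hx.hasFDerivAt
    rw [← AffineMap.lineMap_apply_zero (k := ℝ) x y] at this
    simpa [InnerProductSpace.toDual_apply_apply] using
      this.comp_hasDerivAt 0 AffineMap.hasDerivAt_lineMap
  have := (hf.comp_affineMap (AffineMap.lineMap x y)).le_slope_of_hasDerivAt
    (mem_univ 0) (mem_univ 1) zero_lt_one hderiv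
  simp only [slope, Function.comp_apply, AffineMap.lineMap_apply_zero,
    AffineMap.lineMap_apply_one, vsub_eq_sub, sub_zero, inv_one, one_smul] at this
  linarith

lemma ConvexOn.inner_sub_sub_nonneg_of_hasGradientAt [CompleteSpace V] {f : V → ℝ} {f' : V → V}
    (hf : ConvexOn ℝ univ f) (hgrad : ∀ x, HasGradientAt f (f' x) x) (x y : V) :
    0 ≤ ⟪f' y - f' x, y - x⟫ := by
  have hxy := hf.add_inner_le_of_hasGradientAt (hgrad x) y
  have hyx := hf.add_inner_le_of_hasGradientAt (hgrad y) x
  rw [← neg_sub y x, inner_neg_right] at hyx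
  rw [inner_sub_left]
  linarith

lemma HasFDerivAt.inner_apply_self_nonneg {T : V → V} {A : V →L[ℝ] V} {x : V}
    (hT : HasFDerivAt T A x) (hmono : ∀ y, 0 ≤ ⟪T y - T x, y - x⟫) (v : V) :
    0 ≤ ⟪A v, v⟫ := by
  have hderiv : HasDerivAt (fun t : ℝ => ⟪T (x + t • v), v⟫) ⟪A v, v⟫ 0 := by
    have hline : HasDerivAt (fun t : ℝ => x + t • v) v 0 := by
      simpa using ((hasDerivAt_id (0:ℝ)).smul_const v).const_add x
    have hT' : HasFDerivAt T A (x + (0:ℝ) • v) := by simpa using hT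
    exact (hT'.comp_hasDerivAt 0 hline).inner ℝ (hasDerivAt_const 0 v) |>.congr_deriv (by simp)
  have hslope : Tendsto (slope (fun t : ℝ => ⟪T (x + t • v), v⟫) 0) (𝓝[>] 0) (𝓝 ⟪A v, v⟫) :=
    (hasDerivAt_iff_tendsto_slope.1 hderiv).mono_left (nhdsWithin_mono _ fun t ht => ne_of_gt ht)
  refine ge_of_tendsto hslope ?_
  filter_upwards [self_mem_nhdsWithin] with t (ht : 0 < t)
  have h := hmono (x + t • v)
  rw [add_sub_cancel_left, real_inner_smul_right] at h
  rw [slope_def_field, sub_zero, zero_smul, add_zero, ← inner_sub_left]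
  exact div_nonneg (nonneg_of_mul_nonneg_right h ht) ht.le

lemma le_add_inner_add_mul_sq_of_lipschitzWith [CompleteSpace V] {f : V → ℝ} {f' : V → V}
    {K : ℝ≥0} (hgrad : ∀ x, HasGradientAt f (f' x) x) (hK : LipschitzWith K f') (x y : V) :
    f y ≤ f x + ⟪f' x, y - x⟫ + K * ‖y - x‖ ^ 2 := by
  have hmvt := (convex_closedBall x ‖y - x‖).norm_image_sub_le_of_norm_hasFDerivWithin_le'
    (φ := InnerProductSpace.toDual ℝ V (f' x)) (C := K * ‖y - x‖)
    (fun z _ => (hgrad z).hasFDerivAt.hasFDerivWithinAt) ?_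
    (Metric.mem_closedBall_self (norm_nonneg _)) (y := y) (by simp [dist_eq_norm])
  · rw [InnerProductSpace.toDual_apply_apply, Real.norm_eq_abs, abs_le] at hmvt
    linarith [hmvt.2]
  · intro z hz
    rw [← map_sub, LinearIsometryEquiv.norm_map]
    rw [Metric.mem_closedBall, dist_eq_norm] at hz
    exact (hK.norm_sub_le z x).trans (by gcongr)

lemma prox_variational_ineq {g : V → ℝ} {prox : V → V} (hg : ConvexOn ℝ univ g)
    (hprox : ∀ v u, (1/2) * ‖prox v - v‖ ^ 2 + g (prox v) ≤ (1/2) * ‖u - v‖ ^ 2 + g u)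
    (v u : V) : 0 ≤ ⟪prox v - v, u - prox v⟫ + (g u - g (prox v)) := by
  set p := prox v
  set a := ⟪p - v, u - p⟫ + (g u - g p)
  -- compare `p` with the points `p + t • (u - p)` and let `t → 0⁺`
  have hsmall : ∀ t ∈ Ioc (0:ℝ) 1, 0 ≤ a + t / 2 * ‖u - p‖ ^ 2 := by
    rintro t ⟨ht0, ht1⟩
    have hmin := hprox v (p + t • (u - p))
    have hconv : g (p + t • (u - p)) ≤ (1 - t) * g p + t * g u := by
      have := hg.2 (mem_univ p) (mem_univ u) (by linarith : 0 ≤ 1 - t) ht0.le (by ring)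
      rwa [show (1 - t) • p + t • u = p + t • (u - p) by module] at this
    have hsq : ‖p + t • (u - p) - v‖ ^ 2
        = ‖p - v‖ ^ 2 + 2 * t * ⟪p - v, u - p⟫ + t ^ 2 * ‖u - p‖ ^ 2 := by
      rw [show p + t • (u - p) - v = (p - v) + t • (u - p) by abel, norm_add_sq_real,
        real_inner_smul_right, norm_smul, mul_pow, Real.norm_eq_abs, sq_abs]
      ring
    have : 0 ≤ t * (a + t / 2 * ‖u - p‖ ^ 2) := by nlinarith
    exact nonneg_of_mul_nonneg_right this ht0
  have hlim : Tendsto (fun t : ℝ => a + t / 2 * ‖u - p‖ ^ 2) (𝓝[>] 0) (𝓝 a) := by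
    have : Continuous fun t : ℝ => a + t / 2 * ‖u - p‖ ^ 2 := by fun_prop
    simpa using this.continuousWithinAt.tendsto (x := 0) (s := Ioi 0)
  refine ge_of_tendsto hlim ?_
  filter_upwards [Ioc_mem_nhdsGT zero_lt_one] with t ht using hsmall t ht

lemma lipschitzWith_one_of_prox {g : V → ℝ} {prox : V → V} (hg : ConvexOn ℝ univ g)
    (hprox : ∀ v u, (1/2) * ‖prox v - v‖ ^ 2 + g (prox v) ≤ (1/2) * ‖u - v‖ ^ 2 + g u) :
    LipschitzWith 1 prox := by
  refine LipschitzWith.of_dist_le_mul fun v w => ?_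
  rw [NNReal.coe_one, one_mul, dist_eq_norm, dist_eq_norm]
  have hv := prox_variational_ineq hg hprox v (prox w)
  have hw := prox_variational_ineq hg hprox w (prox v)
  have hsum : ⟪prox v - v, prox w - prox v⟫ + ⟪prox w - w, prox v - prox w⟫
      = ⟪prox v - prox w, v - w⟫ - ‖prox v - prox w‖ ^ 2 := by
    rw [← real_inner_self_eq_norm_sq]
    simp only [inner_sub_left, inner_sub_right, real_inner_comm]
    ring
  have hcs := real_inner_le_norm (prox v - prox w) (v - w)
  nlinarith [norm_nonneg (prox v - prox w), norm_nonneg (v - w)]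

lemma add_le_add_of_prox_eq_self [CompleteSpace V] {f g : V → ℝ} {f'x x : V} {prox : V → V}
    (hf : ConvexOn ℝ univ f) (hx : HasGradientAt f f'x x) (hg : ConvexOn ℝ univ g)
    (hprox : ∀ v u, (1/2) * ‖prox v - v‖ ^ 2 + g (prox v) ≤ (1/2) * ‖u - v‖ ^ 2 + g u)
    (hfix : prox (x - f'x) = x) (u : V) : f x + g x ≤ f u + g u := by
  have hvar := prox_variational_ineq hg hprox (x - f'x) u
  rw [hfix, sub_sub_cancel] at hvar
  linarith [hf.add_inner_le_of_hasGradientAt hx u]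

lemma MapClusterPt.apply_eq_of_tendsto {X Y ι : Type*} [TopologicalSpace X] [TopologicalSpace Y]
    [T2Space Y] {l : Filter ι} {u : ι → X} {a : X} {φ : X → Y} {b : Y}
    (ha : MapClusterPt a l u) (hφ : ContinuousAt φ a) (hφu : Tendsto (φ ∘ u) l (𝓝 b)) :
    φ a = b :=
  eq_of_nhds_neBot (ClusterPt.mono (ha.continuousAt_comp hφ) hφu)

lemma monotoneOn_div_add_mul_rpow {A c ρ : ℝ} (hA : 0 < A) (hc : 0 ≤ c)
    (hρ1 : ρ ≤ 1) : MonotoneOn (fun s => s / (A + c * s ^ ρ)) (Ici 0) := by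
  intro s (hs : 0 ≤ s) t (ht : 0 ≤ t) hst
  have hcross : s * t ^ ρ ≤ t * s ^ ρ := by
    have hsplit : ∀ u : ℝ, 0 ≤ u → u = u ^ ρ * u ^ (1 - ρ) := fun u hu => by
      rw [← Real.rpow_add' hu (by norm_num), add_sub_cancel, Real.rpow_one]
    calc s * t ^ ρ = s ^ ρ * s ^ (1 - ρ) * t ^ ρ := by rw [← hsplit s hs]
      _ ≤ s ^ ρ * t ^ (1 - ρ) * t ^ ρ := by gcongr
      _ = s ^ ρ * (t ^ ρ * t ^ (1 - ρ)) := by ring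
      _ = t * s ^ ρ := by rw [← hsplit t ht, mul_comm]
  dsimp only
  rw [div_le_div_iff₀ (by positivity) (by positivity)]
  nlinarith [mul_le_mul_of_nonneg_left hcross hc]

lemma tendsto_zero_of_tendsto_comp_of_monotoneOn {ι : Type*} {l : Filter ι} {ψ : ℝ → ℝ}
    {u : ι → ℝ} (hψ : MonotoneOn ψ (Ici 0)) (hψpos : ∀ s, 0 < s → 0 < ψ s)
    (hu : ∀ i, 0 ≤ u i) (h : Tendsto (ψ ∘ u) l (𝓝 0)) : Tendsto u l (𝓝 0) := by
  refine tendsto_order.2 ⟨fun a ha => Eventually.of_forall fun i => ha.trans_le (hu i),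
    fun ε hε => ?_⟩
  filter_upwards [h.eventually (gt_mem_nhds (hψpos ε hε))] with i hi
  by_contra hle
  exact (hψ hε.le (hu i) (not_lt.1 hle)).not_gt hi

lemma min_one_le_pow_of_forall_lt_pow {β τ : ℝ} {i : ℕ} (hβ : 0 < β)
    (h : ∀ j < i, τ < β ^ j) : min 1 (β * τ) ≤ β ^ i := by
  cases i with
  | zero => simp
  | succ j =>
    rw [pow_succ']
    exact (min_le_right _ _).trans (by gcongr; exact (h j j.lt_succ_self).le)

lemma tendsto_zero_of_descent_bounds {r μ α D Φ : ℕ → ℝ} {a A C c η ρ : ℝ}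
    (ha : 0 < a) (hA : 0 < A) (hC : 0 < C) (hc : 0 < c) (hη : η < 1) (hρ : ρ ∈ Icc 0 1)
    (hr : ∀ k, 0 < r k) (hμ : ∀ k, μ k = c * r k ^ ρ) (hΦ : BddBelow (range Φ))
    (hdesc : ∀ k, a * (α k * (μ k * D k ^ 2)) ≤ Φ k - Φ (k + 1))
    (hα : ∀ k, min 1 (C * μ k) ≤ α k) (hD : ∀ k, (1 - η) * r k ≤ (A + μ k) * D k) :
    Tendsto r atTop (𝓝 0) := by
  -- `ψ (r k)` bounds `α k * (μ k * D k ^ 2)` from below in terms of `r k` alone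
  set ψ : ℝ → ℝ := fun s =>
    min 1 (C * (c * s ^ ρ)) * ((c * s ^ ρ) * ((1 - η) * (s / (A + c * s ^ ρ))) ^ 2)
  have hψ_mono : MonotoneOn ψ (Ici 0) := by
    intro s (hs : 0 ≤ s) t (ht : 0 ≤ t) hst
    have hquot := monotoneOn_div_add_mul_rpow hA hc.le hρ.2 hs ht hst
    have := sub_pos.2 hη
    dsimp only [ψ] at hquot ⊢
    gcongr
    all_goals exact hρ.1
  have hψ_pos : ∀ s, 0 < s → 0 < ψ s := fun s hs =>
    mul_pos (lt_min one_pos (by positivity)) (by have := sub_pos.2 hη; positivity)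
  have hψ_le : ∀ k, ψ (r k) ≤ α k * (μ k * D k ^ 2) := by
    intro k
    have hμpos : 0 < μ k := hμ k ▸ by have := hr k; positivity
    have hDk : (1 - η) * (r k / (A + μ k)) ≤ D k := by
      rw [← mul_div_assoc, div_le_iff₀ (by positivity), mul_comm (D k)]
      exact hD k
    have hαpos : 0 ≤ α k := (lt_min one_pos (by positivity)).le.trans (hα k)
    have := sub_pos.2 hη
    have := hr k
    dsimp only [ψ]
    rw [← hμ k]
    gcongr ?_ * (_ * ?_ ^ 2)
    exact hα k
  have hgap_nonneg : ∀ k, 0 ≤ Φ k - Φ (k + 1) := fun k =>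
    (mul_nonneg ha.le ((hψ_pos _ (hr k)).le.trans (hψ_le k))).trans (hdesc k)
  have hgap : Tendsto (fun k => Φ k - Φ (k + 1)) atTop (𝓝 0) := by
    have hlim := tendsto_atTop_ciInf
      (antitone_nat_of_succ_le fun k => sub_nonneg.1 (hgap_nonneg k)) hΦ
    simpa using hlim.sub (hlim.comp (tendsto_add_atTop_nat 1))
  refine tendsto_zero_of_tendsto_comp_of_monotoneOn hψ_mono hψ_pos (fun k => (hr k).le) ?_
  refine squeeze_zero (fun k => (hψ_pos _ (hr k)).le) (fun k => ?_)
    (by simpa using hgap.div_const a)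
  rw [le_div_iff₀ ha, mul_comm]
  exact (mul_le_mul_of_nonneg_left (hψ_le k) ha.le).trans (hdesc k)

-- The models `ℓ_k` and `q_k` of the method, centred at `x = xᵏ`.
def linModel (f g : V → ℝ) (f' : V → V) (x y : V) : ℝ := f x + ⟪f' x, y - x⟫ + g y

noncomputable def quadModel (f g : V → ℝ) (f' : V → V) (H : V →L[ℝ] V) (x y : V) : ℝ :=
  linModel f g f' x y + (1/2) * ⟪H (y - x), y - x⟫

section Models

variable {f g : V → ℝ} {f' : V → V}

@[simp] lemma linModel_self (x : V) : linModel f g f' x x = f x + g x := by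
  simp [linModel]

@[simp] lemma quadModel_self (H : V →L[ℝ] V) (x : V) : quadModel f g f' H x x = f x + g x := by
  simp [quadModel]

lemma linModel_lineMap_le (hg : ConvexOn ℝ univ g) {t : ℝ} (ht0 : 0 ≤ t) (ht1 : t ≤ 1)
    (x y : V) :
    linModel f g f' x (x + t • (y - x)) ≤ f x + g x - t * (f x + g x - linModel f g f' x y) := by
  have hconv := hg.2 (mem_univ x) (mem_univ y) (by linarith : 0 ≤ 1 - t) ht0 (by ring)
  rw [show (1 - t) • x + t • y = x + t • (y - x) by module, smul_eq_mul, smul_eq_mul] at hconv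
  simp only [linModel, add_sub_cancel_left, real_inner_smul_right]
  linarith

lemma mul_norm_sq_le_of_quadModel_sub_le {H : V →L[ℝ] V} {μ ζ : ℝ} {x y : V}
    (hH : ∀ v, μ * ‖v‖ ^ 2 ≤ ⟪H v, v⟫)
    (hinex : quadModel f g f' H x y - quadModel f g f' H x x ≤
      ζ * (linModel f g f' x y - linModel f g f' x x)) :
    μ * ‖y - x‖ ^ 2 ≤ 2 * (1 - ζ) * (f x + g x - linModel f g f' x y) := by
  rw [quadModel_self, linModel_self] at hinex
  unfold quadModel at hinex
  linarith [hH (y - x)]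

lemma lt_of_armijo_fails [CompleteSpace V] {K : ℝ≥0} (hgrad : ∀ x, HasGradientAt f (f' x) x)
    (hK : LipschitzWith K f') (hK0 : 0 < K) (hg : ConvexOn ℝ univ g) {θ ζ μ t : ℝ} {x y : V}
    (hθ : θ < 1) (hζ : ζ < 1) (hxy : y ≠ x) (ht0 : 0 < t) (ht1 : t ≤ 1)
    (hmodel : μ * ‖y - x‖ ^ 2 ≤ 2 * (1 - ζ) * (f x + g x - linModel f g f' x y))
    (hfail : f x + g x - (f (x + t • (y - x)) + g (x + t • (y - x))) <
      θ * (f x + g x - linModel f g f' x (x + t • (y - x)))) :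
    (1 - θ) / (2 * (1 - ζ) * K) * μ < t := by
  set z := x + t • (y - x)
  set Δ := f x + g x - linModel f g f' x y
  have hzx : z - x = t • (y - x) := add_sub_cancel_left x _
  have hupper : f z + g z ≤ linModel f g f' x z + K * t ^ 2 * ‖y - x‖ ^ 2 := by
    have := le_add_inner_add_mul_sq_of_lipschitzWith hgrad hK x z
    rw [hzx, norm_smul, Real.norm_eq_abs, mul_pow, sq_abs] at this
    simp only [linModel, hzx]
    linarith
  have hseg : t * Δ ≤ f x + g x - linModel f g f' x z := by
    linarith [linModel_lineMap_le (f := f) (f' := f') hg ht0.le ht1 x y]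
  have hquad : (1 - θ) * (t * Δ) < K * t ^ 2 * ‖y - x‖ ^ 2 := by
    linarith [mul_le_mul_of_nonneg_left hseg (sub_nonneg.2 hθ.le)]
  have hd : 0 < t * ‖y - x‖ ^ 2 := by have := sub_ne_zero.2 hxy; positivity
  have hcancel : (1 - θ) * μ * (t * ‖y - x‖ ^ 2) < 2 * (1 - ζ) * K * t * (t * ‖y - x‖ ^ 2) := by
    linarith [mul_le_mul_of_nonneg_left hmodel (mul_nonneg (sub_nonneg.2 hθ.le) ht0.le),
      mul_lt_mul_of_pos_left hquad (by linarith : (0:ℝ) < 2 * (1 - ζ))]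
  rw [div_mul_eq_mul_div, div_lt_iff₀ (by have := sub_pos.2 hζ; positivity)]
  linarith [lt_of_mul_lt_mul_right hcancel hd.le]

lemma mul_le_sub_of_armijo (hg : ConvexOn ℝ univ g) {θ ζ μ t : ℝ} {x y : V} (hθ : 0 ≤ θ)
    (hζ : ζ < 1) (ht0 : 0 ≤ t) (ht1 : t ≤ 1)
    (hmodel : μ * ‖y - x‖ ^ 2 ≤ 2 * (1 - ζ) * (f x + g x - linModel f g f' x y))
    (hacc : θ * (f x + g x - linModel f g f' x (x + t • (y - x))) ≤
      f x + g x - (f (x + t • (y - x)) + g (x + t • (y - x)))) :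
    θ / (2 * (1 - ζ)) * (t * (μ * ‖y - x‖ ^ 2)) ≤
      f x + g x - (f (x + t • (y - x)) + g (x + t • (y - x))) := by
  have hζ' : 1 - ζ ≠ 0 := by linarith
  calc θ / (2 * (1 - ζ)) * (t * (μ * ‖y - x‖ ^ 2))
      ≤ θ / (2 * (1 - ζ)) * (t * (2 * (1 - ζ) * (f x + g x - linModel f g f' x y))) := by
        gcongr
    _ = θ * (t * (f x + g x - linModel f g f' x y)) := by field_simp
    _ ≤ θ * (f x + g x - linModel f g f' x (x + t • (y - x))) := by
        gcongr
        linarith [linModel_lineMap_le (f := f) (f' := f') hg ht0 ht1 x y]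
    _ ≤ _ := hacc

end Models

lemma norm_sub_prox_le {prox : V → V} (hprox : LipschitzWith 1 prox) (v : V) (H : V →L[ℝ] V)
    (x y : V) :
    ‖x - prox (x - v)‖ ≤ ‖y - prox (y - v - H (y - x))‖ + 2 * ‖y - x‖ + ‖H (y - x)‖ := by
  have hnexp : ‖prox (y - v - H (y - x)) - prox (x - v)‖ ≤ ‖y - x‖ + ‖H (y - x)‖ := by
    have := hprox.norm_sub_le (y - v - H (y - x)) (x - v)
    rw [NNReal.coe_one, one_mul, show y - v - H (y - x) - (x - v) = (y - x) - H (y - x) by abel]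
      at this
    exact this.trans (norm_sub_le _ _)
  have htri := norm_sub_le_norm_sub_add_norm_sub x y (prox (x - v))
  have htri' := norm_sub_le_norm_sub_add_norm_sub y (prox (y - v - H (y - x))) (prox (x - v))
  rw [norm_sub_rev x y] at htri
  linarith

lemma mul_norm_sq_le_inner_add_smul_id {A : V →L[ℝ] V} (hA : ∀ v, 0 ≤ ⟪A v, v⟫) (μ : ℝ)
    (v : V) : μ * ‖v‖ ^ 2 ≤ ⟪(A + μ • ContinuousLinearMap.id ℝ V) v, v⟫ := by
  simp only [add_apply, smul_apply, ContinuousLinearMap.id_apply, inner_add_left,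
    real_inner_smul_left, real_inner_self_eq_norm_sq]
  linarith [hA v]

lemma norm_add_smul_id_apply_le {A : V →L[ℝ] V} {K μ : ℝ} (hA : ‖A‖ ≤ K) (hμ : 0 ≤ μ) (v : V) :
    ‖(A + μ • ContinuousLinearMap.id ℝ V) v‖ ≤ (K + μ) * ‖v‖ := by
  simp only [add_apply, smul_apply, ContinuousLinearMap.id_apply]
  calc ‖A v + μ • v‖ ≤ ‖A‖ * ‖v‖ + μ * ‖v‖ := by
        refine (norm_add_le _ _).trans (add_le_add (A.le_opNorm v) ?_)
        rw [norm_smul, Real.norm_of_nonneg hμ]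
    _ ≤ (K + μ) * ‖v‖ := by nlinarith [norm_nonneg v]

lemma irpn_step_bounds [CompleteSpace V] {f g : V → ℝ} {f' : V → V} {A : V →L[ℝ] V} {x : V}
    {prox : V → V} {K : ℝ≥0} (hgrad : ∀ x, HasGradientAt f (f' x) x) (hK : LipschitzWith K f')
    (hK0 : 0 < K) (hf : ConvexOn ℝ univ f) (hA : HasFDerivAt f' A x) (hg : ConvexOn ℝ univ g)
    (hprox : LipschitzWith 1 prox) {θ ζ η β μ : ℝ} {y : V} {i : ℕ}
    (hθ : θ ∈ Ioo 0 1) (hζ : ζ < 1) (hη : η < 1) (hβ : β ∈ Ioo 0 1) (hμ : 0 < μ)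
    (hr : 0 < ‖x - prox (x - f' x)‖)
    (hinex1 : ‖y - prox (y - f' x - (A + μ • ContinuousLinearMap.id ℝ V) (y - x))‖ ≤
      η * ‖x - prox (x - f' x)‖)
    (hinex2 : quadModel f g f' (A + μ • ContinuousLinearMap.id ℝ V) x y -
        quadModel f g f' (A + μ • ContinuousLinearMap.id ℝ V) x x ≤
      ζ * (linModel f g f' x y - linModel f g f' x x))
    (hacc : θ * (f x + g x - linModel f g f' x (x + β ^ i • (y - x))) ≤
      f x + g x - (f (x + β ^ i • (y - x)) + g (x + β ^ i • (y - x))))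
    (hrej : ∀ j < i, f x + g x - (f (x + β ^ j • (y - x)) + g (x + β ^ j • (y - x))) <
      θ * (f x + g x - linModel f g f' x (x + β ^ j • (y - x)))) :
    θ / (2 * (1 - ζ)) * (β ^ i * (μ * ‖y - x‖ ^ 2)) ≤
        f x + g x - (f (x + β ^ i • (y - x)) + g (x + β ^ i • (y - x))) ∧
      min 1 (β * (1 - θ) / (2 * (1 - ζ) * K) * μ) ≤ β ^ i ∧
      (1 - η) * ‖x - prox (x - f' x)‖ ≤ (2 + K + μ) * ‖y - x‖ := by
  have hApsd := hA.inner_apply_self_nonneg (hf.inner_sub_sub_nonneg_of_hasGradientAt hgrad x)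
  have hmodel :=
    mul_norm_sq_le_of_quadModel_sub_le (mul_norm_sq_le_inner_add_smul_id hApsd μ) hinex2
  have hres : (1 - η) * ‖x - prox (x - f' x)‖ ≤ (2 + K + μ) * ‖y - x‖ := by
    linarith [norm_sub_prox_le hprox (f' x) (A + μ • ContinuousLinearMap.id ℝ V) x y,
      norm_add_smul_id_apply_le (hA.le_of_lipschitz hK) hμ.le (y - x)]
  have hyx : y ≠ x := by
    rintro rfl
    rw [sub_self, norm_zero, mul_zero] at hres
    exact hres.not_gt (mul_pos (sub_pos.2 hη) hr)
  have hβi := pow_le_one₀ (n := i) hβ.1.le hβ.2.le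
  refine ⟨mul_le_sub_of_armijo hg hθ.1.le hζ (pow_nonneg hβ.1.le i) hβi hmodel hacc, ?_, hres⟩
  rw [mul_div_assoc, mul_assoc]
  exact min_one_le_pow_of_forall_lt_pow hβ.1 fun j hj =>
    lt_of_armijo_fails hgrad hK hK0 hg hθ.2 hζ hyx (pow_pos hβ.1 j)
      (pow_le_one₀ hβ.1.le hβ.2.le) hmodel (hrej j hj)

lemma residual_eq_zero_and_add_le_add_of_mapClusterPt [CompleteSpace V] {f g : V → ℝ}
    {f' prox : V → V} {x : ℕ → V} {xs : V} (hf : ConvexOn ℝ univ f)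
    (hgrad : ∀ x, HasGradientAt f (f' x) x) (hf' : Continuous f') (hg : ConvexOn ℝ univ g)
    (hprox : ∀ v u, (1/2) * ‖prox v - v‖ ^ 2 + g (prox v) ≤ (1/2) * ‖u - v‖ ^ 2 + g u)
    (hres : Tendsto (fun k => ‖x k - prox (x k - f' (x k))‖) atTop (𝓝 0))
    (hxs : MapClusterPt xs atTop x) :
    ‖xs - prox (xs - f' xs)‖ = 0 ∧ ∀ u, f xs + g xs ≤ f u + g u := by
  have hcont : Continuous fun y => ‖y - prox (y - f' y)‖ := by
    have := (lipschitzWith_one_of_prox hg hprox).continuous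
    fun_prop
  have hr0 := hxs.apply_eq_of_tendsto hcont.continuousAt hres
  have hfix : prox (xs - f' xs) = xs := (sub_eq_zero.1 (norm_eq_zero.1 hr0)).symm
  exact ⟨hr0, add_le_add_of_prox_eq_self hf (hgrad xs) hg hprox hfix⟩

end

theorem stmt6_general {n : ℕ} (f g : E n → ℝ) (f' : E n → E n)
    (hess : E n → E n →L[ℝ] E n) (prox : E n → E n)
    (hfconv : ConvexOn ℝ Set.univ f)
    (hgrad : ∀ x, HasGradientAt f (f' x) x)
    (hhess : ∀ x, HasFDerivAt f' (hess x) x)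
    (hgconv : ConvexOn ℝ Set.univ g)
    (hprox : ∀ v u, (1/2) * ‖prox v - v‖ ^ 2 + g (prox v) ≤ (1/2) * ‖u - v‖ ^ 2 + g u)
    (F : E n → ℝ) (hF : ∀ y, F y = f y + g y)
    (X : Set (E n)) (hX : X = {y | ∀ z, F y ≤ F z}) (hXne : X.Nonempty)
    (r : E n → ℝ) (hr : ∀ y, r y = ‖y - prox (y - f' y)‖)
    (L₁ : ℝ) (hL₁ : 0 < L₁) (hlip : ∀ y z, ‖f' y - f' z‖ ≤ L₁ * ‖y - z‖)
    -- IRPN parameters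
    (θ ζ η c ρ β : ℝ)
    (hθ : θ ∈ Set.Ioo (0:ℝ) (1/2)) (hζ : ζ ∈ Set.Ioo θ (1/2))
    (hη : η ∈ Set.Ioo (0:ℝ) 1) (hc : 0 < c) (hρ : ρ ∈ Set.Icc (0:ℝ) 1)
    (hβ : β ∈ Set.Ioo (0:ℝ) 1)
    -- IRPN iterates and auxiliary data
    (x xh : ℕ → E n) (μ : ℕ → ℝ) (H : ℕ → E n →L[ℝ] E n)
    (ℓ q : ℕ → E n → ℝ) (rk : ℕ → E n → ℝ)
    (d : ℕ → E n) (i : ℕ → ℕ) (α : ℕ → ℝ)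
    (hrpos : ∀ k, 0 < r (x k))
    (hμ : ∀ k, μ k = c * r (x k) ^ ρ)
    (hH : ∀ k, H k = hess (x k) + μ k • ContinuousLinearMap.id ℝ (E n))
    (hℓ : ∀ k y, ℓ k y = f (x k) + ⟪f' (x k), y - x k⟫ + g y)
    (hq : ∀ k y, q k y = ℓ k y + (1/2) * ⟪H k (y - x k), y - x k⟫)
    (hrk : ∀ k y, rk k y = ‖y - prox (y - f' (x k) - H k (y - x k))‖)
    (hinex1 : ∀ k, rk k (xh k) ≤ η * min (r (x k)) (r (x k) ^ (1 + ρ)))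
    (hinex2 : ∀ k, q k (xh k) - q k (x k) ≤ ζ * (ℓ k (xh k) - ℓ k (x k)))
    (hd : ∀ k, d k = xh k - x k)
    (hdesc : ∀ k, F (x k) - F (x k + β ^ i k • d k) ≥
      θ * (ℓ k (x k) - ℓ k (x k + β ^ i k • d k)))
    (hmin : ∀ k j, j < i k → ¬ (F (x k) - F (x k + β ^ j • d k) ≥
      θ * (ℓ k (x k) - ℓ k (x k + β ^ j • d k))))
    (hα : ∀ k, α k = β ^ i k)
    (hstep : ∀ k, x (k + 1) = x k + α k • d k)
    :
    Tendsto (fun k => r (x k)) atTop (nhds 0) ∧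
      ∀ xstar : E n, MapClusterPt xstar atTop x → r xstar = 0 ∧ xstar ∈ X := by
  have hK : LipschitzWith ⟨L₁, hL₁.le⟩ f' :=
    .of_dist_le_mul fun y z => by rw [dist_eq_norm, dist_eq_norm]; exact hlip y z
  have hζ1 : 0 < 1 - ζ := by linarith [hζ.2]
  have hθ1 : 0 < 1 - θ := by linarith [hθ.2]
  have hℓ' : ∀ k y, ℓ k y = linModel f g f' (x k) y := hℓ
  have hq' : ∀ k y, q k y = quadModel f g f' (H k) (x k) y := fun k y => by rw [hq, hℓ']; rfl
  subst hX
  simp only [hr, hF] at hrpos hμ hinex1 hXne ⊢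
  simp only [hq', hℓ', hrk, hH] at hinex1 hinex2
  simp only [hF, hℓ', hd, linModel_self, ge_iff_le, not_le] at hdesc hmin
  have hiter := fun k => irpn_step_bounds hgrad hK (NNReal.coe_pos.1 hL₁) hfconv (hhess (x k))
    hgconv (lipschitzWith_one_of_prox hgconv hprox) ⟨hθ.1, by linarith⟩ (by linarith) hη.2 hβ
    (hμ k ▸ by have := hrpos k; positivity) (hrpos k)
    ((hinex1 k).trans (mul_le_mul_of_nonneg_left (min_le_left _ _) hη.1.le)) (hinex2 k)
    (hdesc k) (hmin k)
  obtain ⟨xm, hxm⟩ := hXne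
  have hres : Tendsto (fun k => ‖x k - prox (x k - f' (x k))‖) atTop (𝓝 0) := by
    refine tendsto_zero_of_descent_bounds (Φ := fun k => f (x k) + g (x k))
      (α := fun k => β ^ i k) (div_pos hθ.1 (mul_pos two_pos hζ1)) (by positivity)
      (div_pos (mul_pos hβ.1 hθ1) (mul_pos (mul_pos two_pos hζ1) hL₁)) hc hη.2 hρ hrpos hμ
      ⟨_, forall_mem_range.2 fun k => hxm (x k)⟩ (fun k => ?_) (fun k => (hiter k).2.1)
      (fun k => (hiter k).2.2)
    rw [hstep, hα, hd]
    exact (hiter k).1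
  exact ⟨hres, fun xs hxs => residual_eq_zero_and_add_le_add_of_mapClusterPt hfconv hgrad
    hK.continuous hgconv hprox hres hxs⟩

/-- Under the L₁-Lipschitz gradient assumption and the IRPN iteration
hypotheses, `r(xᵏ) → 0`; consequently every cluster point `x*` of `{xᵏ}` satisfies
`r(x*) = 0` and `x* ∈ X`, i.e., `x*` minimizes `F`. -/
theorem stmt6 {n : ℕ} (f g : E n → ℝ) (f' : E n → E n)
    (hess : E n → E n →L[ℝ] E n) (prox : E n → E n)
    (hfconv : ConvexOn ℝ Set.univ f) (hfC2 : ContDiff ℝ 2 f)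
    (hgrad : ∀ x, HasGradientAt f (f' x) x)
    (hhess : ∀ x, HasFDerivAt f' (hess x) x)
    (hsa : ∀ x u w, ⟪hess x u, w⟫ = ⟪u, hess x w⟫)
    (hgconv : ConvexOn ℝ Set.univ g) (hgcont : Continuous g)
    (hprox : ∀ v u, (1/2) * ‖prox v - v‖ ^ 2 + g (prox v) ≤ (1/2) * ‖u - v‖ ^ 2 + g u)
    (F : E n → ℝ) (hF : ∀ y, F y = f y + g y)
    (X : Set (E n)) (hX : X = {y | ∀ z, F y ≤ F z}) (hXne : X.Nonempty)
    (r : E n → ℝ) (hr : ∀ y, r y = ‖y - prox (y - f' y)‖)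
    (L₁ : ℝ) (hL₁ : 0 < L₁) (hlip : ∀ y z, ‖f' y - f' z‖ ≤ L₁ * ‖y - z‖)
    -- IRPN parameters
    (θ ζ η c ρ β : ℝ)
    (hθ : θ ∈ Set.Ioo (0:ℝ) (1/2)) (hζ : ζ ∈ Set.Ioo θ (1/2))
    (hη : η ∈ Set.Ioo (0:ℝ) 1) (hc : 0 < c) (hρ : ρ ∈ Set.Icc (0:ℝ) 1)
    (hβ : β ∈ Set.Ioo (0:ℝ) 1)
    -- IRPN iterates and auxiliary data
    (x xh : ℕ → E n) (μ : ℕ → ℝ) (H : ℕ → E n →L[ℝ] E n)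
    (ℓ q : ℕ → E n → ℝ) (rk : ℕ → E n → ℝ)
    (d : ℕ → E n) (i : ℕ → ℕ) (α : ℕ → ℝ)
    (hrpos : ∀ k, 0 < r (x k))
    (hμ : ∀ k, μ k = c * r (x k) ^ ρ)
    (hH : ∀ k, H k = hess (x k) + μ k • ContinuousLinearMap.id ℝ (E n))
    (hℓ : ∀ k y, ℓ k y = f (x k) + ⟪f' (x k), y - x k⟫ + g y)
    (hq : ∀ k y, q k y = ℓ k y + (1/2) * ⟪H k (y - x k), y - x k⟫)
    (hrk : ∀ k y, rk k y = ‖y - prox (y - f' (x k) - H k (y - x k))‖)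
    (hinex1 : ∀ k, rk k (xh k) ≤ η * min (r (x k)) (r (x k) ^ (1 + ρ)))
    (hinex2 : ∀ k, q k (xh k) - q k (x k) ≤ ζ * (ℓ k (xh k) - ℓ k (x k)))
    (hd : ∀ k, d k = xh k - x k)
    (hdesc : ∀ k, F (x k) - F (x k + β ^ i k • d k) ≥
      θ * (ℓ k (x k) - ℓ k (x k + β ^ i k • d k)))
    (hmin : ∀ k j, j < i k → ¬ (F (x k) - F (x k + β ^ j • d k) ≥
      θ * (ℓ k (x k) - ℓ k (x k + β ^ j • d k))))
    (hα : ∀ k, α k = β ^ i k)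
    (hstep : ∀ k, x (k + 1) = x k + α k • d k)
    :
    Tendsto (fun k => r (x k)) atTop (nhds 0) ∧
      ∀ xstar : E n, MapClusterPt xstar atTop x → r xstar = 0 ∧ xstar ∈ X :=
  stmt6_general f g f' hess prox hfconv hgrad hhess hgconv hprox F hF X hX hXne r hr L₁ hL₁ hlip θ ζ
    η c ρ β hθ hζ hη hc hρ hβ x xh μ H ℓ q rk d i α hrpos hμ hH hℓ hq hrk hinex1 hinex2 hd hdesc
    hmin hα hstep
end

section
/- Let x̄ ∈ X be a minimizer of F, let x⁰ ∈ E, let H be a self-adjoint continuous linear operator on E with ⟨H u, u⟩ ≥ μ·‖u‖² for all u ∈ E with μ > 0, and let x̃ be a minimizer over E of q(x) = f(x⁰) + ⟨∇f(x⁰), x − x⁰⟩ + (1/2)⟨H(x − x⁰), x − x⁰⟩ + g(x). Then ‖x̃ − x̄‖ ≤ (1/μ)·‖∇f(x̄) − ∇f(x⁰) − H(x̄ − x⁰)‖. -/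
open scoped RealInnerProductSpace

/-!
Both `x̄` and `x̃` minimize "smooth + `g`", so each satisfies the first-order variational
inequality `0 ≤ ⟪∇φ(x), y - x⟫ + g y - g x`, with `φ = f` at `x̄` and `φ` the quadratic model at
`x̃`, whose gradient there is `∇f(x⁰) + H(x̃ - x⁰)`. Testing each inequality with the other point
and adding them cancels `g`, leaving `⟪H(x̃ - x̄), x̃ - x̄⟫ ≤ ⟪∇f(x̄) - ∇f(x⁰) - H(x̄ - x⁰), x̃ - x̄⟫`;
strong positivity of `H` and Cauchy–Schwarz finish.
-/

open Set

theorem IsMinOn.hasFDerivAt_add_convexOn_nonneg {V : Type*} [NormedAddCommGroup V]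
    [NormedSpace ℝ V] {φ g : V → ℝ} {φ' : V →L[ℝ] ℝ} {s : Set V} {x y : V}
    (hmin : IsMinOn (fun z => φ z + g z) s x) (hφ : HasFDerivAt φ φ' x)
    (hg : ConvexOn ℝ s g) (hx : x ∈ s) (hy : y ∈ s) :
    0 ≤ φ' (y - x) + (g y - g x) := by
  -- Along the segment, `g` lies below its chord, so replacing it by the chord keeps `0` a minimum.
  set ℓ : ℝ → ℝ := fun t => φ (x + t • (y - x)) + t * (g y - g x)
  have hℓmin : IsLocalMinOn ℓ (Icc 0 1) 0 := by
    refine IsMinOn.localize fun t ht => ?_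
    have hmem : x + t • (y - x) ∈ s := by
      simpa [AffineMap.lineMap_apply, add_comm] using hg.1.lineMap_mem hx hy ht
    have hgt : g (x + t • (y - x)) ≤ g x + t * (g y - g x) := by
      have := hg.2 hx hy (sub_nonneg.2 ht.2) ht.1 (by ring)
      rw [show (1 - t) • x + t • y = x + t • (y - x) by module, smul_eq_mul, smul_eq_mul] at this
      linarith
    have hφg : φ x + g x ≤ φ (x + t • (y - x)) + g (x + t • (y - x)) := hmin hmem
    show ℓ 0 ≤ ℓ t
    simp only [ℓ, zero_smul, add_zero, zero_mul]
    linarith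
  have hline : HasDerivAt (fun t : ℝ => x + t • (y - x)) (y - x) 0 := by
    simpa using ((hasDerivAt_id (0 : ℝ)).smul_const (y - x)).const_add x
  have hℓ : HasDerivAt ℓ (φ' (y - x) + (g y - g x)) 0 := by
    have hφ0 : HasFDerivAt φ φ' (x + (0 : ℝ) • (y - x)) := by simpa using hφ
    exact (hφ0.comp_hasDerivAt 0 hline).add (hasDerivAt_mul_const (g y - g x))
  have hone : (1 : ℝ) ∈ posTangentConeAt (Icc (0 : ℝ) 1) 0 :=
    mem_posTangentConeAt_of_segment_subset (by rw [zero_add]; exact segment_subset_Icc zero_le_one)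
  simpa using hℓmin.hasFDerivWithinAt_nonneg hℓ.hasFDerivAt.hasFDerivWithinAt hone

section InnerProductSpace

variable {V : Type*} [NormedAddCommGroup V] [InnerProductSpace ℝ V]

theorem hasFDerivAt_quadratic_model (a : ℝ) (c x₀ : V) {H : V →L[ℝ] V}
    (hH : (H : V →ₗ[ℝ] V).IsSymmetric) (x : V) :
    HasFDerivAt (fun y => a + ⟪c, y - x₀⟫ + (1 / 2) * ⟪H (y - x₀), y - x₀⟫)
      (innerSL ℝ (c + H (x - x₀))) x := by
  have hsub : HasFDerivAt (fun y => y - x₀) (ContinuousLinearMap.id ℝ V) x :=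
    (hasFDerivAt_id x).sub_const x₀
  refine (((hasFDerivAt_const a x).add ((innerSL ℝ c).hasFDerivAt.comp x hsub)).add
    (((H.hasFDerivAt.comp x hsub).inner ℝ hsub).const_mul (1 / 2))).congr_fderiv ?_
  ext d
  have hsymm : ⟪H d, x - x₀⟫ = ⟪H (x - x₀), d⟫ := by rw [hH.apply_clm, real_inner_comm]
  simp only [add_apply, smul_apply, zero_apply, Function.comp_apply,
    ContinuousLinearMap.comp_apply, ContinuousLinearMap.prod_apply, ContinuousLinearMap.id_apply,
    fderivInnerCLM_apply, coe_innerSL_apply, inner_add_left, hsymm, smul_eq_mul]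
  ring

theorem norm_le_of_mul_norm_sq_le_inner {μ : ℝ} (hμ : 0 < μ) {s w : V}
    (h : μ * ‖s‖ ^ 2 ≤ ⟪w, s⟫) : ‖s‖ ≤ (1 / μ) * ‖w‖ := by
  have hcs : μ * ‖s‖ ^ 2 ≤ ‖w‖ * ‖s‖ := h.trans (real_inner_le_norm w s)
  rcases (norm_nonneg s).eq_or_lt with hs | hs
  · rw [← hs]; positivity
  · rw [one_div_mul_eq_div, le_div_iff₀ hμ]
    nlinarith

end InnerProductSpace

theorem stmt7_general {n : ℕ} (f g : E n → ℝ) (f' : E n → E n)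
    (hgrad : ∀ x, HasGradientAt f (f' x) x)
    (hgconv : ConvexOn ℝ Set.univ g)
    (F : E n → ℝ) (hF : ∀ y, F y = f y + g y)
    (X : Set (E n)) (hX : X = {y | ∀ z, F y ≤ F z})
    (xbar : E n) (hxbar : xbar ∈ X)
    (x₀ : E n) (H : E n →L[ℝ] E n)
    (hsa : ∀ u w, ⟪H u, w⟫ = ⟪u, H w⟫)
    (μ : ℝ) (hμ : 0 < μ) (hlb : ∀ u, μ * ‖u‖ ^ 2 ≤ ⟪H u, u⟫)
    (q : E n → ℝ)
    (hq : ∀ y, q y = f x₀ + ⟪f' x₀, y - x₀⟫ + (1/2) * ⟪H (y - x₀), y - x₀⟫ + g y)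
    (xt : E n) (hxt : ∀ y, q xt ≤ q y) :
    ‖xt - xbar‖ ≤ (1 / μ) * ‖f' xbar - f' x₀ - H (xbar - x₀)‖ := by
  subst hX
  have hxbar_min : IsMinOn (fun z => f z + g z) univ xbar :=
    isMinOn_univ_iff.2 fun z => by simpa only [hF] using hxbar z
  have hxt_min : IsMinOn
      (fun z => f x₀ + ⟪f' x₀, z - x₀⟫ + (1 / 2) * ⟪H (z - x₀), z - x₀⟫ + g z) univ xt :=
    isMinOn_univ_iff.2 fun z => by simpa only [hq] using hxt z
  have hxbar_opt : 0 ≤ ⟪f' xbar, xt - xbar⟫ + (g xt - g xbar) :=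
    hxbar_min.hasFDerivAt_add_convexOn_nonneg (hgrad xbar).hasFDerivAt hgconv trivial trivial
  have hxt_opt : 0 ≤ ⟪f' x₀ + H (xt - x₀), xbar - xt⟫ + (g xbar - g xt) :=
    hxt_min.hasFDerivAt_add_convexOn_nonneg (hasFDerivAt_quadratic_model _ _ _ hsa xt) hgconv
      trivial trivial
  have hsplit : ⟪f' xbar - f' x₀ - H (xbar - x₀), xt - xbar⟫ = ⟪H (xt - xbar), xt - xbar⟫ +
      (⟪f' xbar, xt - xbar⟫ + ⟪f' x₀ + H (xt - x₀), xbar - xt⟫) := by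
    rw [show xbar - xt = -(xt - xbar) by abel, show xbar - x₀ = (xt - x₀) - (xt - xbar) by abel,
      map_sub]
    simp only [inner_sub_left, inner_add_left, inner_neg_right]
    ring
  exact norm_le_of_mul_norm_sq_le_inner hμ ((hlb _).trans (by linarith))

/-- If `x̄ ∈ X` minimizes `F`, `H` is self-adjoint with
`⟨Hu,u⟩ ≥ μ‖u‖²` (`μ > 0`), and `x̃` minimizes `q`, then
`‖x̃ − x̄‖ ≤ (1/μ)‖∇f(x̄) − ∇f(x⁰) − H(x̄ − x⁰)‖`. -/
theorem stmt7 {n : ℕ} (f g : E n → ℝ) (f' : E n → E n)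
    (hfconv : ConvexOn ℝ Set.univ f) (hfC2 : ContDiff ℝ 2 f)
    (hgrad : ∀ x, HasGradientAt f (f' x) x)
    (hgconv : ConvexOn ℝ Set.univ g) (hgcont : Continuous g)
    (F : E n → ℝ) (hF : ∀ y, F y = f y + g y)
    (X : Set (E n)) (hX : X = {y | ∀ z, F y ≤ F z}) (hXne : X.Nonempty)
    (xbar : E n) (hxbar : xbar ∈ X)
    (x₀ : E n) (H : E n →L[ℝ] E n)
    (hsa : ∀ u w, ⟪H u, w⟫ = ⟪u, H w⟫)
    (μ : ℝ) (hμ : 0 < μ) (hlb : ∀ u, μ * ‖u‖ ^ 2 ≤ ⟪H u, u⟫)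
    (q : E n → ℝ)
    (hq : ∀ y, q y = f x₀ + ⟪f' x₀, y - x₀⟫ + (1/2) * ⟪H (y - x₀), y - x₀⟫ + g y)
    (xt : E n) (hxt : ∀ y, q xt ≤ q y) :
    ‖xt - xbar‖ ≤ (1 / μ) * ‖f' xbar - f' x₀ - H (xbar - x₀)‖ :=
  stmt7_general f g f' hgrad hgconv F hF X hX xbar hxbar x₀ H hsa μ hμ hlb q hq xt hxt
end

section
/- Suppose the Hessian map x ↦ ∇²f(x) is L₂-Lipschitz in operator norm with L₂ > 0. Let x⁰ ∈ E, μ > 0, H = ∇²f(x⁰) + μ·Id, let x̃ be a minimizer of q over E, and let x̄ ∈ X satisfy ‖x⁰ − x̄‖ = dist(x⁰, X). Then ‖x̃ − x⁰‖ ≤ ((L₂/(2μ))·dist(x⁰, X) + 2)·dist(x⁰, X). -/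
/-!
Adding the first-order optimality conditions of `x̃` for `q` (tested at `x̄`) and of `x̄` for
`F = f + g` (tested at `x̃`) cancels the `g`-terms; dropping the nonnegative term
`⟪∇²f(x⁰) s, s⟫` leaves `μ‖s‖² ≤ ⟪∇f(x̄) - ∇f(x⁰) - ∇²f(x⁰) d - μ d, s⟫` with `s = x̃ - x̄`,
`d = x̄ - x⁰`. The Lipschitz Hessian bounds the Taylor remainder by `(L₂/2)‖d‖²`, so
`‖s‖ ≤ (L₂/(2μ))‖d‖² + ‖d‖`, and `‖x̃ - x⁰‖ ≤ ‖s‖ + ‖d‖` with `‖d‖ = dist(x⁰, X)`.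
-/

open scoped RealInnerProductSpace

open Set

section NormedSpace

variable {V W : Type*} [NormedAddCommGroup V] [NormedSpace ℝ V] [NormedAddCommGroup W]
  [NormedSpace ℝ W]

theorem ConvexOn.sub_le_of_hasLineDerivAt_of_forall_add_le {φ g : V → ℝ} {x y : V} {D : ℝ}
    (hg : ConvexOn ℝ univ g) (hmin : ∀ z, φ x + g x ≤ φ z + g z)
    (hφ : HasLineDerivAt ℝ φ D x (y - x)) : g x - g y ≤ D := by
  refine ge_of_tendsto hφ.tendsto_slope_zero_right ?_
  filter_upwards [Ioo_mem_nhdsGT (zero_lt_one' ℝ)] with t ⟨ht₀, ht₁⟩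
  have hconv : g (x + t • (y - x)) ≤ (1 - t) * g x + t * g y := by
    have h := hg.2 (mem_univ x) (mem_univ y) (sub_nonneg.2 ht₁.le) ht₀.le (sub_add_cancel 1 t)
    rwa [show (1 - t) • x + t • y = x + t • (y - x) by module] at h
  have := hmin (x + t • (y - x))
  rw [smul_eq_mul, le_inv_mul_iff₀ ht₀]
  linarith

theorem hasDerivAt_comp_add_smul {f : V → W} {L : V →L[ℝ] W} {x d : V} {t : ℝ} (hf : HasFDerivAt f L (x + t • d)) :
    HasDerivAt (fun s : ℝ => f (x + s • d)) (L d) t := by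
  have hline : HasDerivAt (fun s : ℝ => x + s • d) d t := by
    simpa using ((hasDerivAt_id t).smul_const d).const_add x
  exact hf.comp_hasDerivAt t hline

theorem norm_sub_sub_fderiv_le_of_lipschitz_fderiv {f : V → W} {f' : V → V →L[ℝ] W} {L : ℝ}
    (hf : ∀ x, HasFDerivAt f (f' x) x) (hlip : ∀ y z, ‖f' y - f' z‖ ≤ L * ‖y - z‖) (x d : V) :
    ‖f (x + d) - f x - f' x d‖ ≤ L / 2 * ‖d‖ ^ 2 := by
  set γ : ℝ → W := fun t => f (x + t • d) - f x - t • f' x d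
  have hγ : ∀ t, HasDerivAt γ (f' (x + t • d) d - f' x d) t := fun t => by
    simpa [γ, Pi.sub_def] using ((hasDerivAt_comp_add_smul (hf _)).sub_const (f x)).sub
      ((hasDerivAt_id t).smul_const (f' x d))
  have hB : ∀ t, HasDerivAt (fun t : ℝ => L / 2 * ‖d‖ ^ 2 * t ^ 2) (L * ‖d‖ ^ 2 * t) t := fun t =>
    ((hasDerivAt_pow 2 t).const_mul (L / 2 * ‖d‖ ^ 2)).congr_deriv (by push_cast; ring)
  have hbound : ∀ t ∈ Ico (0 : ℝ) 1, ‖f' (x + t • d) d - f' x d‖ ≤ L * ‖d‖ ^ 2 * t := by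
    rintro t ⟨ht₀, -⟩
    calc ‖f' (x + t • d) d - f' x d‖ = ‖(f' (x + t • d) - f' x) d‖ := rfl
      _ ≤ ‖f' (x + t • d) - f' x‖ * ‖d‖ := ContinuousLinearMap.le_opNorm _ _
      _ ≤ L * ‖x + t • d - x‖ * ‖d‖ := by gcongr; exact hlip _ _
      _ = L * ‖d‖ ^ 2 * t := by
        rw [add_sub_cancel_left, norm_smul, Real.norm_of_nonneg ht₀]; ring
  have := image_norm_le_of_norm_deriv_right_le_deriv_boundary
    (fun t _ => (hγ t).continuousAt.continuousWithinAt) (fun t _ => (hγ t).hasDerivWithinAt)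
    (by simp [γ]) hB hbound (right_mem_Icc.2 zero_le_one)
  simpa [γ] using this

end NormedSpace

section InnerProductSpace

variable {V : Type*} [NormedAddCommGroup V] [InnerProductSpace ℝ V]

theorem mul_norm_le_norm_of_mul_norm_sq_le_inner {μ : ℝ} {r s : V} (h : μ * ‖s‖ ^ 2 ≤ ⟪r, s⟫) :
    μ * ‖s‖ ≤ ‖r‖ := by
  rcases (norm_nonneg s).eq_or_lt with hs | hs
  · rw [← hs, mul_zero]; exact norm_nonneg r
  · refine le_of_mul_le_mul_right ?_ hs
    calc μ * ‖s‖ * ‖s‖ = μ * ‖s‖ ^ 2 := by ring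
      _ ≤ ‖r‖ * ‖s‖ := h.trans (real_inner_le_norm r s)

theorem hasLineDerivAt_inner_add_half_inner_self {T : V →L[ℝ] V}
    (hT : ∀ u w, ⟪T u, w⟫ = ⟪u, T w⟫) (c a x u : V) :
    HasLineDerivAt ℝ (fun y => ⟪c, y - a⟫ + 1 / 2 * ⟪T (y - a), y - a⟫) ⟪c + T (x - a), u⟫ x u := by
  have hp : HasDerivAt (fun t : ℝ => x + t • u - a) u 0 := by
    simpa using (((hasDerivAt_id (0 : ℝ)).smul_const u).const_add x).sub_const a
  have h := ((hasDerivAt_const (0 : ℝ) c).inner ℝ hp).add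
    (((T.hasFDerivAt.comp_hasDerivAt 0 hp).inner ℝ hp).const_mul (1 / 2))
  unfold HasLineDerivAt
  convert h using 1
  · ext t; simp [add_sub_right_comm]
  · simp [hT u, real_inner_comm u, inner_add_right]
    ring

variable [CompleteSpace V]

theorem ConvexOn.inner_gradient_sub_gradient_nonneg {f : V → ℝ} {f' : V → V}
    (hf : ConvexOn ℝ univ f) (hgrad : ∀ x, HasGradientAt f (f' x) x) (x y : V) :
    0 ≤ ⟪f' y - f' x, y - x⟫ := by
  have hψ : ConvexOn ℝ univ (f ∘ AffineMap.lineMap (k := ℝ) x y) := by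
    simpa using hf.comp_affineMap (AffineMap.lineMap (k := ℝ) x y)
  have hψ' : ∀ t : ℝ, HasDerivAt (f ∘ AffineMap.lineMap (k := ℝ) x y)
      ⟪f' (AffineMap.lineMap (k := ℝ) x y t), y - x⟫ t := fun t => by
    simpa using (hgrad _).hasFDerivAt.comp_hasDerivAt t AffineMap.hasDerivAt_lineMap
  have h := (hψ.le_slope_of_hasDerivAt (mem_univ 0) (mem_univ 1) zero_lt_one (hψ' 0)).trans
    (hψ.slope_le_of_hasDerivAt (mem_univ 0) (mem_univ 1) zero_lt_one (hψ' 1))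
  rw [inner_sub_left]
  simpa using h

theorem ConvexOn.inner_hessian_self_nonneg {f : V → ℝ} {f' : V → V} {A : V →L[ℝ] V} {x : V}
    (hf : ConvexOn ℝ univ f) (hgrad : ∀ x, HasGradientAt f (f' x) x) (hA : HasFDerivAt f' A x)
    (w : V) : 0 ≤ ⟪A w, w⟫ := by
  refine ge_of_tendsto (((hA.hasLineDerivAt w).tendsto_slope_zero_right).inner
    (tendsto_const_nhds (x := w))) ?_
  filter_upwards [self_mem_nhdsWithin] with t (ht : 0 < t)
  have h := hf.inner_gradient_sub_gradient_nonneg hgrad x (x + t • w)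
  rw [add_sub_cancel_left, real_inner_smul_right] at h
  rw [real_inner_smul_left]
  exact mul_nonneg (inv_nonneg.2 ht.le) (nonneg_of_mul_nonneg_right h ht)

end InnerProductSpace

theorem stmt8_general {n : ℕ} (f g : E n → ℝ) (f' : E n → E n)
    (hess : E n → E n →L[ℝ] E n)
    (hfconv : ConvexOn ℝ Set.univ f)
    (hgrad : ∀ x, HasGradientAt f (f' x) x)
    (hhess : ∀ x, HasFDerivAt f' (hess x) x)
    (hsa : ∀ x u w, ⟪hess x u, w⟫ = ⟪u, hess x w⟫)
    (hgconv : ConvexOn ℝ Set.univ g)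
    (F : E n → ℝ) (hF : ∀ y, F y = f y + g y)
    (X : Set (E n)) (hX : X = {y | ∀ z, F y ≤ F z})
    (L₂ : ℝ) (hlip2 : ∀ y z, ‖hess y - hess z‖ ≤ L₂ * ‖y - z‖)
    (x₀ : E n) (μ : ℝ) (hμ : 0 < μ)
    (H : E n →L[ℝ] E n) (hH : H = hess x₀ + μ • ContinuousLinearMap.id ℝ (E n))
    (q : E n → ℝ)
    (hq : ∀ y, q y = f x₀ + ⟪f' x₀, y - x₀⟫ + (1/2) * ⟪H (y - x₀), y - x₀⟫ + g y)
    (xt : E n) (hxt : ∀ y, q xt ≤ q y)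
    (xbar : E n) (hxbar : xbar ∈ X) (hproj : ‖x₀ - xbar‖ = Metric.infDist x₀ X) :
    ‖xt - x₀‖ ≤ ((L₂ / (2 * μ)) * Metric.infDist x₀ X + 2) * Metric.infDist x₀ X := by
  set D := Metric.infDist x₀ X
  set s := xt - xbar
  set d := xbar - x₀
  have hd : ‖d‖ = D := by rw [norm_sub_rev, hproj]
  have hHsa : ∀ u w, ⟪H u, w⟫ = ⟪u, H w⟫ := fun u w => by
    simp [hH, inner_add_left, inner_add_right, real_inner_smul_left, real_inner_smul_right, hsa]
  have hq_opt : g xt - g xbar ≤ ⟪f' x₀ + H (xt - x₀), xbar - xt⟫ := by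
    refine hgconv.sub_le_of_hasLineDerivAt_of_forall_add_le (fun z => ?_)
      (hasLineDerivAt_inner_add_half_inner_self hHsa (f' x₀) x₀ xt _)
    have := hxt z
    rw [hq, hq] at this
    linarith
  have hF_opt : g xbar - g xt ≤ ⟪f' xbar, s⟫ := by
    refine hgconv.sub_le_of_hasLineDerivAt_of_forall_add_le (fun z => ?_)
      ((hgrad xbar).hasFDerivAt.hasLineDerivAt s)
    rw [hX] at hxbar
    simpa only [hF] using hxbar z
  have hpsd := hfconv.inner_hessian_self_nonneg hgrad (hhess x₀) s
  have hkey : μ * ‖s‖ ^ 2 ≤ ⟪f' xbar - f' x₀ - hess x₀ d - μ • d, s⟫ := by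
    rw [show xbar - xt = -s by simp [s], show xt - x₀ = s + d by simp [s, d], hH] at hq_opt
    simp only [inner_neg_right, inner_add_left, inner_sub_left, map_add, add_apply, smul_apply,
      ContinuousLinearMap.id_apply, real_inner_smul_left, real_inner_self_eq_norm_sq] at hq_opt ⊢
    linarith
  have hr : ‖f' xbar - f' x₀ - hess x₀ d - μ • d‖ ≤ L₂ / 2 * D ^ 2 + μ * D := by
    have htaylor := norm_sub_sub_fderiv_le_of_lipschitz_fderiv hhess hlip2 x₀ d
    rw [add_sub_cancel, hd] at htaylor
    calc _ ≤ ‖f' xbar - f' x₀ - hess x₀ d‖ + ‖μ • d‖ := norm_sub_le _ _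
      _ ≤ _ := by rw [norm_smul, Real.norm_of_nonneg hμ.le, hd]; linarith
  have hs : μ * ‖s‖ ≤ L₂ / 2 * D ^ 2 + μ * D :=
    (mul_norm_le_norm_of_mul_norm_sq_le_inner hkey).trans hr
  calc ‖xt - x₀‖ = ‖s + d‖ := by simp [s, d]
    _ ≤ ‖s‖ + D := hd ▸ norm_add_le s d
    _ ≤ _ := by
      rw [← le_div_iff₀' hμ] at hs
      calc ‖s‖ + D ≤ (L₂ / 2 * D ^ 2 + μ * D) / μ + D := by linarith
        _ = _ := by field_simp; ring

/-- If the Hessian map is L₂-Lipschitz in operator norm, `μ > 0`,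
`H = ∇²f(x⁰) + μ·Id`, `x̃` minimizes `q`, and `x̄ ∈ X` is the nearest point of `X`
to `x⁰`, then `‖x̃ − x⁰‖ ≤ ((L₂/(2μ))·dist(x⁰, X) + 2)·dist(x⁰, X)`. -/
theorem stmt8 {n : ℕ} (f g : E n → ℝ) (f' : E n → E n)
    (hess : E n → E n →L[ℝ] E n)
    (hfconv : ConvexOn ℝ Set.univ f) (hfC2 : ContDiff ℝ 2 f)
    (hgrad : ∀ x, HasGradientAt f (f' x) x)
    (hhess : ∀ x, HasFDerivAt f' (hess x) x)
    (hsa : ∀ x u w, ⟪hess x u, w⟫ = ⟪u, hess x w⟫)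
    (hgconv : ConvexOn ℝ Set.univ g) (hgcont : Continuous g)
    (F : E n → ℝ) (hF : ∀ y, F y = f y + g y)
    (X : Set (E n)) (hX : X = {y | ∀ z, F y ≤ F z}) (hXne : X.Nonempty)
    (L₂ : ℝ) (hL₂ : 0 < L₂) (hlip2 : ∀ y z, ‖hess y - hess z‖ ≤ L₂ * ‖y - z‖)
    (x₀ : E n) (μ : ℝ) (hμ : 0 < μ)
    (H : E n →L[ℝ] E n) (hH : H = hess x₀ + μ • ContinuousLinearMap.id ℝ (E n))
    (q : E n → ℝ)
    (hq : ∀ y, q y = f x₀ + ⟪f' x₀, y - x₀⟫ + (1/2) * ⟪H (y - x₀), y - x₀⟫ + g y)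
    (xt : E n) (hxt : ∀ y, q xt ≤ q y)
    (xbar : E n) (hxbar : xbar ∈ X) (hproj : ‖x₀ - xbar‖ = Metric.infDist x₀ X) :
    ‖xt - x₀‖ ≤ ((L₂ / (2 * μ)) * Metric.infDist x₀ X + 2) * Metric.infDist x₀ X :=
  stmt8_general f g f' hess hfconv hgrad hhess hsa hgconv F hF X hX L₂ hlip2 x₀ μ hμ H hH q hq xt
    hxt xbar hxbar hproj
end
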